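/- arXiv:1706.04649 — 10 statements merged into one kernel-verified Lean document; each statement's English description precedes it below -/
import Mathlib

section
/- The number of 312-avoiding permutations of [n] equals the n-th Catalan number C_n = (1/(n+1)) * binomial(2n, n). -/
/-!
If a 312-avoiding permutation has its minimum at position `b`, every entry to the left of the
minimum is smaller than every entry to its right (otherwise these two entries and the minimum form
a 312), so by counting the left entries are exactly `1, …, b`. Conversely, gluing two
312-avoiders `σ ∈ S_b`, `τ ∈ S_m` into `(σ + 1) 0 (τ + b + 1)` gives a 312-avoider, since an
occurrence of 312 can neither use the minimum nor straddle it. Hence the numbers of 312-avoiders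
satisfy the Catalan recursion `A (n + 1) = ∑ b, A b * A (n - b)`.
-/

/-- A permutation `π` of `[n]` is 312-avoiding if there are no indices `a < b < c`
with `π a > π b`, `π b < π c`, and `π a > π c`. -/
def Avoids312 (n : ℕ) (π : Equiv.Perm (Fin n)) : Prop :=
  ¬ ∃ a b c : Fin n, a < b ∧ b < c ∧ π b < π a ∧ π b < π c ∧ π c < π a

open Equiv Finset

namespace Function

variable {α β γ δ : Type*}

def Avoids312 [LT α] [LT β] (f : α → β) : Prop :=
  ¬∃ a b c, a < b ∧ b < c ∧ f b < f c ∧ f c < f a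

theorem Avoids312.comp_strictMono [Preorder α] [Preorder β] [LT γ] {f : β → γ}
    (hf : Avoids312 f) {g : α → β} (hg : StrictMono g) : Avoids312 (f ∘ g) :=
  fun ⟨a, b, c, hab, hbc, h₁, h₂⟩ => hf ⟨g a, g b, g c, hg hab, hg hbc, h₁, h₂⟩

theorem _root_.StrictMono.avoids312_comp_iff [LT α] [LinearOrder β] [Preorder γ] {h : β → γ}
    (hh : StrictMono h) {f : α → β} : Avoids312 (h ∘ f) ↔ Avoids312 f := by
  simp only [Avoids312, comp_apply, hh.lt_iff_lt]

theorem Avoids312.of_comp_eq_comp [Preorder α] [Preorder β] [LinearOrder γ] [Preorder δ]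
    {f : β → δ} (hf : Avoids312 f) {g : α → β} (hg : StrictMono g) {h : γ → δ}
    (hh : StrictMono h) {f' : α → γ} (heq : h ∘ f' = f ∘ g) : Avoids312 f' :=
  hh.avoids312_comp_iff.1 (heq ▸ hf.comp_strictMono hg)

theorem Avoids312.left_lt_right [Preorder α] [LinearOrder β] {f : α → β} (hf : Avoids312 f)
    (hinj : Injective f) {p x z : α} (hp : ∀ a, f p ≤ f a) (hx : x < p) (hz : p < z) :
    f x < f z := by
  by_contra! h
  exact hf ⟨x, p, z, hx, hz, (hp z).lt_of_ne (hinj.ne hz.ne),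
    h.lt_of_ne (hinj.ne (hx.trans hz).ne')⟩

theorem avoids312_of_left_lt_right [LinearOrder α] [Preorder β] [LinearOrder γ] [LinearOrder δ]
    {f : α → β} {p : α} {left : γ → α} {right : δ → α} (hl : StrictMono left)
    (hr : StrictMono right) (hleft : ∀ x < p, x ∈ Set.range left)
    (hright : ∀ x, p < x → x ∈ Set.range right)
    (hmin : ∀ a ≠ p, f p < f a) (hcross : ∀ x z, x < p → p < z → f x < f z)
    (hfl : Avoids312 (f ∘ left)) (hfr : Avoids312 (f ∘ right)) :
    Avoids312 f := by
  rintro ⟨x, y, z, hxy, hyz, h₁, h₂⟩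
  rcases lt_trichotomy z p with hzp | rfl | hpz
  · obtain ⟨x, rfl⟩ := hleft x (hxy.trans (hyz.trans hzp))
    obtain ⟨y, rfl⟩ := hleft y (hyz.trans hzp)
    obtain ⟨z, rfl⟩ := hleft z hzp
    exact hfl ⟨x, y, z, hl.lt_iff_lt.1 hxy, hl.lt_iff_lt.1 hyz, h₁, h₂⟩
  · exact (hmin y hyz.ne).asymm h₁
  rcases lt_trichotomy x p with hxp | rfl | hpx
  · exact (hcross x z hxp hpz).asymm h₂
  · exact (hmin z hpz.ne').asymm h₂
  · obtain ⟨x, rfl⟩ := hright x hpx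
    obtain ⟨y, rfl⟩ := hright y (hpx.trans hxy)
    obtain ⟨z, rfl⟩ := hright z (hpx.trans (hxy.trans hyz))
    exact hfr ⟨x, y, z, hr.lt_iff_lt.1 hxy, hr.lt_iff_lt.1 hyz, h₁, h₂⟩

end Function

theorem avoids312_iff {n : ℕ} {π : Perm (Fin n)} : Avoids312 n π ↔ Function.Avoids312 π :=
  not_congr ⟨fun ⟨a, b, c, hab, hbc, _, h₁, h₂⟩ => ⟨a, b, c, hab, hbc, h₁, h₂⟩,
    fun ⟨a, b, c, hab, hbc, h₁, h₂⟩ =>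
      ⟨a, b, c, hab, hbc, h₁.trans h₂, h₁, h₂⟩⟩

namespace Fin

variable {n : ℕ} {f : Fin n → Fin n}

theorem val_le_of_forall_lt (hf : Function.Injective f) {p x : Fin n}
    (h : ∀ z, p < z → f x < f z) : (f x : ℕ) ≤ p := by
  have := card_le_card_of_injOn f (s := Ioi p) (t := Ioi (f x))
    (fun z hz => by simpa using h z (by simpa using hz)) hf.injOn
  simp only [card_Ioi] at this
  omega

theorem lt_val_of_forall_lt (hf : Function.Injective f) {p z : Fin n}
    (h : ∀ a ≤ p, f a < f z) : (p : ℕ) < f z := by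
  have := card_le_card_of_injOn f (s := Iic p) (t := Iio (f z))
    (fun a ha => by simpa using h a (by simpa using ha)) hf.injOn
  simp only [card_Iic, card_Iio] at this
  omega

theorem exists_perm_val_eq_add {k N c : ℕ} {f : Fin k → Fin N} (hf : Function.Injective f)
    (hlo : ∀ i, c ≤ f i) (hhi : ∀ i, f i < c + k) :
    ∃ σ : Perm (Fin k), ∀ i, (f i : ℕ) = σ i + c := by
  refine ⟨Equiv.ofBijective (fun i => ⟨f i - c, by have := hlo i; have := hhi i; omega⟩)
    (Finite.injective_iff_bijective.1 fun i j h => hf (Fin.ext ?_)), fun i => ?_⟩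
  · simp only [Fin.mk.injEq] at h
    have := hlo i
    have := hlo j
    omega
  · simp only [ofBijective_apply]
    have := hlo i
    omega

end Fin

namespace Avoids312

variable {b m : ℕ}

/-- `glue σ τ` is `(σ + 1) 0 (τ + b + 1)` in one-line notation. -/
def glue (σ : Perm (Fin b)) (τ : Perm (Fin m)) : Fin (b + 1 + m) → Fin (b + 1 + m) :=
  Fin.append (Fin.snoc (fun i => Fin.castAdd m (σ i).succ) 0) fun j => Fin.natAdd (b + 1) (τ j)

variable {σ : Perm (Fin b)} {τ : Perm (Fin m)}

theorem glue_eq_iff {f : Fin (b + 1 + m) → Fin (b + 1 + m)} :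
    glue σ τ = f ↔ (∀ i, f (Fin.castAdd m i.castSucc) = Fin.castAdd m (σ i).succ) ∧
      f (Fin.castAdd m (Fin.last b)) = 0 ∧
        ∀ j, f (Fin.natAdd (b + 1) j) = Fin.natAdd (b + 1) (τ j) := by
  constructor
  · rintro rfl
    simp [glue]
  · rintro ⟨hl, hp, hr⟩
    funext x
    refine Fin.addCases (fun y => Fin.lastCases ?_ (fun i => ?_) y) (fun j => ?_) x <;>
      simp [glue, *]

theorem glue_injective : Function.Injective (glue σ τ) := by
  refine Fin.append_injective_iff.2 ⟨Fin.snoc_injective_iff.2 ⟨?_, ?_⟩, ?_, ?_⟩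
  · intro i j h
    simpa using h
  · rintro ⟨i, hi⟩
    simp [Fin.ext_iff] at hi
  · intro i j h
    simpa using h
  · intro i j
    refine Fin.lastCases ?_ (fun i => ?_) i <;> simp [Fin.ext_iff] <;> omega

theorem glue_injective₂ : Function.Injective2 (glue (b := b) (m := m)) := by
  intro σ σ' τ τ' h
  obtain ⟨hl, -, hr⟩ := glue_eq_iff.1 h
  constructor
  · exact Equiv.ext fun i => by simpa [glue] using (hl i).symm
  · exact Equiv.ext fun j => by simpa [glue] using (hr j).symm

theorem lt_castAdd_last_iff {x : Fin (b + 1 + m)} :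
    x < Fin.castAdd m (Fin.last b) ↔ x ∈ Set.range (Fin.castAdd m ∘ Fin.castSucc) := by
  constructor
  · intro hx
    exact ⟨⟨x, by simpa [Fin.lt_def] using hx⟩, Fin.ext rfl⟩
  · rintro ⟨i, rfl⟩
    simp [Fin.lt_def]

theorem castAdd_last_lt_iff {x : Fin (b + 1 + m)} :
    Fin.castAdd m (Fin.last b) < x ↔ x ∈ Set.range (Fin.natAdd (b + 1)) := by
  constructor
  · intro hx
    refine ⟨⟨x - (b + 1), ?_⟩, Fin.ext ?_⟩ <;> simp [Fin.lt_def] at hx ⊢ <;> omega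
  · rintro ⟨j, rfl⟩
    simp [Fin.lt_def]
    omega

theorem glue_avoids312 (hσ : Function.Avoids312 σ) (hτ : Function.Avoids312 τ) :
    Function.Avoids312 (glue σ τ) := by
  obtain ⟨hl, hp, hr⟩ := glue_eq_iff.1 (rfl : glue σ τ = glue σ τ)
  refine Function.avoids312_of_left_lt_right
    ((Fin.strictMono_castAdd m).comp Fin.strictMono_castSucc) (Fin.strictMono_natAdd (b + 1))
    (fun x => lt_castAdd_last_iff.1) (fun x => castAdd_last_lt_iff.1) (fun a ha => ?_)
    (fun x z hx hz => ?_) ?_ ?_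
  · rw [hp, Fin.pos_iff_ne_zero, ← hp]
    exact glue_injective.ne ha
  · obtain ⟨i, rfl⟩ := lt_castAdd_last_iff.1 hx
    obtain ⟨j, rfl⟩ := castAdd_last_lt_iff.1 hz
    simp only [Function.comp_apply, hl, hr, Fin.lt_def, Fin.val_castAdd, Fin.val_succ,
      Fin.val_natAdd]
    omega
  · rw [show glue σ τ ∘ (Fin.castAdd m ∘ Fin.castSucc) = (Fin.castAdd m ∘ Fin.succ) ∘ σ
        from funext hl, ((Fin.strictMono_castAdd m).comp Fin.strictMono_succ).avoids312_comp_iff]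
    exact hσ
  · rw [show glue σ τ ∘ Fin.natAdd (b + 1) = Fin.natAdd (b + 1) ∘ τ from funext hr,
      (Fin.strictMono_natAdd (b + 1)).avoids312_comp_iff]
    exact hτ

section Decompose

variable {π : Perm (Fin (b + 1 + m))} (hπ : Function.Avoids312 π)
  (h0 : π (Fin.castAdd m (Fin.last b)) = 0)
include hπ h0

theorem exists_perm_left :
    ∃ σ : Perm (Fin b), ∀ i, π (Fin.castAdd m i.castSucc) = Fin.castAdd m (σ i).succ := by
  obtain ⟨σ, hσ⟩ := Fin.exists_perm_val_eq_add (c := 1)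
    (f := π ∘ Fin.castAdd m ∘ Fin.castSucc)
    (π.injective.comp ((Fin.castAdd_injective _ _).comp (Fin.castSucc_injective _)))
    (fun i => Fin.pos_iff_ne_zero.2
      (h0 ▸ π.injective.ne (lt_castAdd_last_iff.2 ⟨i, rfl⟩).ne))
    (fun i => by
      have := Fin.val_le_of_forall_lt π.injective fun z =>
        hπ.left_lt_right π.injective (by simp [h0]) (lt_castAdd_last_iff.2 ⟨i, rfl⟩)
      simp only [Function.comp_apply, Fin.val_castAdd, Fin.val_last] at this ⊢
      omega)
  exact ⟨σ, fun i => Fin.ext (by simpa using hσ i)⟩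

theorem exists_perm_right :
    ∃ τ : Perm (Fin m), ∀ j, π (Fin.natAdd (b + 1) j) = Fin.natAdd (b + 1) (τ j) := by
  obtain ⟨τ, hτ⟩ := Fin.exists_perm_val_eq_add (c := b + 1) (f := π ∘ Fin.natAdd (b + 1))
    (π.injective.comp (Fin.natAdd_injective _ _))
    (fun j => by
      have hj : Fin.castAdd m (Fin.last b) < Fin.natAdd (b + 1) j :=
        castAdd_last_lt_iff.2 ⟨j, rfl⟩
      have := Fin.lt_val_of_forall_lt π.injective (z := Fin.natAdd (b + 1) j) fun a ha => by
        rcases ha.lt_or_eq with ha | rfl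
        · exact hπ.left_lt_right π.injective (by simp [h0]) ha hj
        · exact h0 ▸ Fin.pos_iff_ne_zero.2 (h0 ▸ π.injective.ne hj.ne')
      simpa using this)
    (fun j => (π _).isLt)
  exact ⟨τ, fun j => Fin.ext (by simpa [add_comm] using hτ j)⟩

theorem exists_glue_eq :
    ∃ (σ : Perm (Fin b)) (τ : Perm (Fin m)),
      Function.Avoids312 σ ∧ Function.Avoids312 τ ∧ glue σ τ = π := by
  obtain ⟨σ, hl⟩ := exists_perm_left hπ h0
  obtain ⟨τ, hr⟩ := exists_perm_right hπ h0
  refine ⟨σ, τ, hπ.of_comp_eq_comp ((Fin.strictMono_castAdd m).comp Fin.strictMono_castSucc)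
      ((Fin.strictMono_castAdd m).comp Fin.strictMono_succ) (funext fun i => (hl i).symm),
    hπ.of_comp_eq_comp (Fin.strictMono_natAdd (b + 1)) (Fin.strictMono_natAdd (b + 1))
      (funext fun j => (hr j).symm), glue_eq_iff.2 ⟨hl, h0, hr⟩⟩

end Decompose

noncomputable def gluePerm (σ : Perm (Fin b)) (τ : Perm (Fin m)) : Perm (Fin (b + 1 + m)) :=
  Equiv.ofBijective (glue σ τ) (Finite.injective_iff_bijective.1 glue_injective)

theorem card_fiber (b m : ℕ) :
    Nat.card {π : Perm (Fin (b + 1 + m)) //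
        Function.Avoids312 π ∧ π (Fin.castAdd m (Fin.last b)) = 0} =
      Nat.card {σ : Perm (Fin b) // Function.Avoids312 σ} *
        Nat.card {τ : Perm (Fin m) // Function.Avoids312 τ} := by
  rw [← Nat.card_prod]
  refine (Nat.card_eq_of_bijective (fun στ => ⟨gluePerm στ.1.1 στ.2.1,
    glue_avoids312 στ.1.2 στ.2.2, (glue_eq_iff.1 rfl).2.1⟩) ⟨?_, ?_⟩).symm
  · rintro ⟨⟨σ, _⟩, ⟨τ, _⟩⟩ ⟨⟨σ', _⟩, ⟨τ', _⟩⟩ h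
    obtain ⟨rfl, rfl⟩ :=
      glue_injective₂ (congrArg (fun π : Perm _ => ⇑π) (congrArg Subtype.val h))
    rfl
  · rintro ⟨π, hπ, h0⟩
    obtain ⟨σ, τ, hσ, hτ, h⟩ := exists_glue_eq hπ h0
    exact ⟨(⟨σ, hσ⟩, ⟨τ, hτ⟩), Subtype.ext (Equiv.ext (congrFun h))⟩

theorem card_succ (n : ℕ) :
    Nat.card {π : Perm (Fin (n + 1)) // Function.Avoids312 π} =
      ∑ i : Fin (n + 1), Nat.card {σ : Perm (Fin i) // Function.Avoids312 σ} *
        Nat.card {τ : Perm (Fin (n - i)) // Function.Avoids312 τ} := by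
  classical
  -- `card_fiber` restated for an arbitrary `Fin N`, since `Fin (n + 1)` cannot be rewritten
  -- into `Fin (i + 1 + (n - i))`
  have fiber (N : ℕ) (p : Fin N) (m : ℕ) (h : p + 1 + m = N) :
      Nat.card {π : Perm (Fin N) // Function.Avoids312 π ∧ (π p : ℕ) = 0} =
        Nat.card {σ : Perm (Fin p) // Function.Avoids312 σ} *
          Nat.card {τ : Perm (Fin m) // Function.Avoids312 τ} := by
    obtain ⟨b, hb⟩ := p
    obtain rfl : b + 1 + m = N := h
    simp_rw [Fin.val_eq_zero_iff]
    exact card_fiber b m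
  rw [Nat.card_eq_fintype_card, Fintype.card_subtype,
    card_eq_sum_card_fiberwise (f := fun π => π.symm 0) (t := univ) (by simp)]
  refine sum_congr rfl fun i _ => ?_
  rw [← fiber _ i (n - i) (by omega), Nat.card_eq_fintype_card, Fintype.card_subtype,
    filter_filter]
  congr 1
  ext π
  simp only [mem_filter, mem_univ, true_and]
  rw [Equiv.symm_apply_eq, eq_comm, Fin.val_eq_zero_iff]

theorem card_eq_catalan (n : ℕ) :
    Nat.card {π : Perm (Fin n) // Function.Avoids312 π} = catalan n := by
  induction n using Nat.strong_induction_on with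
  | _ n ih =>
    cases n with
    | zero => simp [Function.Avoids312]
    | succ n =>
      rw [card_succ, catalan_succ]
      exact sum_congr rfl fun i _ => by rw [ih i (by omega), ih (n - i) (by omega)]

end Avoids312

/-- The number of 312-avoiding permutations of `[n]` equals the `n`-th Catalan number
`C_n = (1/(n+1)) * binomial(2n, n)`. -/
theorem stmt0 (n : ℕ) :
    Nat.card {π : Equiv.Perm (Fin n) // Avoids312 n π} = (2 * n).choose n / (n + 1) := by
  rw [Nat.card_congr (Equiv.subtypeEquivRight fun π => avoids312_iff), Avoids312.card_eq_catalan,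
    catalan_eq_centralBinom_div, Nat.centralBinom_eq_two_mul_choose]
end

section
/- If a permutation σ of [n] is 312-avoiding, then its R-projection (obtained by sorting the entries of σ within each carrel into increasing order) is an R-312-avoiding R-permutation. -/
def IsUpperTuple (n : ℕ) (ν : Fin n → ℕ) : Prop :=
  ∀ i : Fin n, i.val + 1 ≤ ν i ∧ ν i ≤ n

def IsRIncr (n : ℕ) (R : Finset ℕ) (ν : Fin n → ℕ) : Prop :=
  ∀ i j : Fin n, j.val = i.val + 1 → (i.val + 1) ∉ R → ν i < ν j

def IsRIncrUpper (n : ℕ) (R : Finset ℕ) (ν : Fin n → ℕ) : Prop :=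
  IsUpperTuple n ν ∧ IsRIncr n R ν

def IsRPerm (n : ℕ) (R : Finset ℕ) (π : Equiv.Perm (Fin n)) : Prop :=
  ∀ i j : Fin n, j.val = i.val + 1 → (i.val + 1) ∉ R → π i < π j

def RAvoids312 (n : ℕ) (R : Finset ℕ) (π : Equiv.Perm (Fin n)) : Prop :=
  ¬ ∃ a b c : Fin n, a < b ∧ b < c ∧
      (∃ q ∈ R, a.val + 1 ≤ q ∧ q ≤ b.val) ∧
      (∃ q ∈ R, b.val + 1 ≤ q ∧ q ≤ c.val) ∧
      π b < π a ∧ π b < π c ∧ π c < π a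

def carrelEnd (n : ℕ) (R : Finset ℕ) (i : Fin n) : ℕ :=
  ((insert n R).filter (fun q => i.val + 1 ≤ q)).min'
    ⟨n, Finset.mem_filter.mpr ⟨Finset.mem_insert_self n R, i.isLt⟩⟩

def SameCarrel {n : ℕ} (R : Finset ℕ) (i j : Fin n) : Prop :=
  ∀ q ∈ R, ¬(i.val + 1 ≤ q ∧ q ≤ j.val)

def IsCritical (n : ℕ) (R : Finset ℕ) (ν : Fin n → ℕ) (i : Fin n) : Prop :=
  ∀ j : Fin n, i < j → SameCarrel R i j → ν i + j.val < ν j + i.val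

open Classical in
noncomputable def coreMap (n : ℕ) (R : Finset ℕ) (ν : Fin n → ℕ) (i : Fin n) : ℕ :=
  let s : Finset (Fin n) :=
    Finset.univ.filter (fun x => i ≤ x ∧ SameCarrel R i x ∧ IsCritical n R ν x)
  if h : s.Nonempty then ν (s.min' h) - ((s.min' h).val - i.val) else 0

def critList (n : ℕ) (R : Finset ℕ) (ν : Fin n → ℕ) : Set (Fin n × ℕ) :=
  {p | IsCritical n R ν p.1 ∧ p.2 = ν p.1}

def rankTuple (n : ℕ) (R : Finset ℕ) (π : Equiv.Perm (Fin n)) (i : Fin n) : ℕ :=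
  (((Finset.univ.filter (fun j : Fin n => j.val < carrelEnd n R i)).image
      (fun j => (π j).val + 1)).sort (· ≤ ·)).getD i.val 0

def GaplessCond (n : ℕ) (R : Finset ℕ) (γ : Fin n → ℕ) : Prop :=
  ∀ q : ℕ, q ∈ R → ∀ (_ : 0 < q) (h2 : q < n),
    γ ⟨q, h2⟩ < γ ⟨q - 1, by omega⟩ →
      (q + (γ ⟨q - 1, by omega⟩ - γ ⟨q, h2⟩ + 1) ≤ carrelEnd n R ⟨q, h2⟩ ∧
        ∀ t : ℕ, t < γ ⟨q - 1, by omega⟩ - γ ⟨q, h2⟩ + 1 → ∀ (ht : q + t < n),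
          γ ⟨q + t, ht⟩ =
            γ ⟨q - 1, by omega⟩ - (γ ⟨q - 1, by omega⟩ - γ ⟨q, h2⟩ + 1) + 1 + t)

def IsRProj (n : ℕ) (R : Finset ℕ) (σ π : Equiv.Perm (Fin n)) : Prop :=
  IsRPerm n R π ∧ ∀ q ∈ R,
    (Finset.univ.filter (fun j : Fin n => j.val < q)).image (fun j => σ j) =
    (Finset.univ.filter (fun j : Fin n => j.val < q)).image (fun j => π j)

/-- If a permutation σ of [n] is 312-avoiding, then its R-projection (obtained by sorting
the entries of σ within each carrel into increasing order) is an R-312-avoiding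
R-permutation. -/
theorem stmt5 (n : ℕ) (R : Finset ℕ) (hR : R ⊆ Finset.Ico 1 n)
    (σ π : Equiv.Perm (Fin n)) (hσ : Avoids312 n σ) (hproj : IsRProj n R σ π) :
    IsRPerm n R π ∧ RAvoids312 n R π := by
  obtain ⟨hπR, himg⟩ := hproj
  refine ⟨hπR, ?_⟩
  rintro ⟨a, b, c, hab, hbc, ⟨q1, hq1R, hq1a, hq1b⟩, ⟨q2, hq2R, hq2b, hq2c⟩, hba, hbc', hca⟩
  apply hσ
  have key : ∀ q ∈ R, ∀ v : Fin n,
      (∃ j : Fin n, j.val < q ∧ σ j = v) ↔ (∃ j : Fin n, j.val < q ∧ π j = v) := by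
    intro q hq v
    have h := himg q hq
    constructor
    · rintro ⟨j, hj, hjv⟩
      have hv : v ∈ (Finset.univ.filter (fun j : Fin n => j.val < q)).image (fun j => π j) := by
        rw [← h]
        exact Finset.mem_image.mpr ⟨j, Finset.mem_filter.mpr ⟨Finset.mem_univ _, hj⟩, hjv⟩
      obtain ⟨j', hj', hv'⟩ := Finset.mem_image.mp hv
      exact ⟨j', (Finset.mem_filter.mp hj').2, hv'⟩
    · rintro ⟨j, hj, hjv⟩
      have hv : v ∈ (Finset.univ.filter (fun j : Fin n => j.val < q)).image (fun j => σ j) := by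
        rw [h]
        exact Finset.mem_image.mpr ⟨j, Finset.mem_filter.mpr ⟨Finset.mem_univ _, hj⟩, hjv⟩
      obtain ⟨j', hj', hv'⟩ := Finset.mem_image.mp hv
      exact ⟨j', (Finset.mem_filter.mp hj').2, hv'⟩
  -- a' : σ a' = π a, a'.val < q1
  obtain ⟨a', ha'lt, ha'⟩ := (key q1 hq1R (π a)).mpr ⟨a, by omega, rfl⟩
  -- b' : σ b' = π b, b'.val < q2
  obtain ⟨b', hb'lt, hb'⟩ := (key q2 hq2R (π b)).mpr ⟨b, by omega, rfl⟩
  -- c' := σ⁻¹ (π c)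
  set c' := σ.symm (π c) with hc'def
  have hc' : σ c' = π c := σ.apply_symm_apply _
  -- b'.val ≥ q1
  have hb'q1 : q1 ≤ b'.val := by
    by_contra hlt
    push_neg at hlt
    obtain ⟨j, hjlt, hj⟩ := (key q1 hq1R (π b)).mp ⟨b', hlt, hb'⟩
    have : j = b := π.injective hj
    omega
  -- c'.val ≥ q2
  have hc'q2 : q2 ≤ c'.val := by
    by_contra hlt
    push_neg at hlt
    obtain ⟨j, hjlt, hj⟩ := (key q2 hq2R (π c)).mp ⟨c', hlt, hc'⟩
    have : j = c := π.injective hj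
    omega
  refine ⟨a', b', c', ?_, ?_, ?_, ?_, ?_⟩
  · exact Fin.lt_def.mpr (by omega)
  · exact Fin.lt_def.mpr (by omega)
  · rw [ha', hb']; exact hba
  · rw [hb', hc']; exact hbc'
  · rw [ha', hc']; exact hca
end

section
/- The restriction of the rank R-tuple map Ψ_R to the set of R-312-avoiding R-permutations is a bijection onto the set of gapless R-tuples. -/
/-!
For a cut `q` let `V_q = {π_1, …, π_q}` and let `p` be the previous cut. The rank tuple lists, on
the carrel `(p, q]`, the `q - p` largest elements of `V_q` in increasing order, and an
`R`-permutation is determined by its sets `V_q`. Between consecutive cuts, `R`-312-avoidance says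
that no value of `V_q \ V_p` lies below a value missing from `V_q` which in turn lies below a value
of `V_p`. This forces `V_q` from `V_p` and the carrel entries `T` of the tuple: it is `V_p ∪ T`
together with the `|V_p ∩ T|` largest numbers below `min T` outside `V_p`. Hence `Ψ_R` is
injective, and the same condition across the cut `q` forces every integer between `γ_{q+1}` and
`γ_q` into the next carrel, which is gaplessness. Conversely, for a gapless tuple this recursion
yields sets of the right sizes satisfying the avoidance condition, because gaplessness puts the
whole interval from `min T` up to `max V_p` inside `T`; listing the new values of each carrel in
increasing order gives the preimage.
-/

open Finset

namespace RankTuple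

section KthSmallest

variable {s t : Finset ℕ} {k l x y : ℕ}

lemma nth_mem (hk : k < #s) : Nat.nth (· ∈ s) k ∈ s :=
  Nat.nth_mem_of_lt_card (p := (· ∈ s)) s.finite_toSet (by simpa using hk)

lemma nth_lt_nth (hkl : k < l) (hl : l < #s) : Nat.nth (· ∈ s) k < Nat.nth (· ∈ s) l :=
  Nat.nth_lt_nth_of_lt_card (p := (· ∈ s)) s.finite_toSet hkl (by simpa using hl)

lemma nth_le_nth (hkl : k ≤ l) (hl : l < #s) : Nat.nth (· ∈ s) k ≤ Nat.nth (· ∈ s) l :=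
  Nat.nth_le_nth_of_lt_card (p := (· ∈ s)) s.finite_toSet hkl (by simpa using hl)

lemma count_mem_eq_card_filter_lt : Nat.count (· ∈ s) x = #{y ∈ s | y < x} := by
  rw [Nat.count_eq_card_filter_range]
  congr 1
  ext y
  simp [and_comm]

lemma card_filter_lt_nth (hk : k < #s) : #{y ∈ s | y < Nat.nth (· ∈ s) k} = k := by
  rw [← count_mem_eq_card_filter_lt]
  exact Nat.count_nth_of_lt_card_finite (p := (· ∈ s)) s.finite_toSet (by simpa using hk)

lemma nth_eq_of_card_filter_lt (hx : x ∈ s) (h : #{y ∈ s | y < x} = k) :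
    Nat.nth (· ∈ s) k = x := by
  rw [← h, ← count_mem_eq_card_filter_lt]
  exact Nat.nth_count (p := (· ∈ s)) hx

lemma card_filter_lt_lt_card (hx : x ∈ s) : #{y ∈ s | y < x} < #s :=
  card_lt_card (filter_ssubset.2 ⟨x, hx, lt_irrefl x⟩)

lemma lt_nth_of_forall_ne (hx : x ∈ s) (hk : k < #s)
    (hne : ∀ l, k ≤ l → l < #s → Nat.nth (· ∈ s) l ≠ x) :
    x < Nat.nth (· ∈ s) k := by
  have hlt := card_filter_lt_lt_card hx
  have hxt := nth_eq_of_card_filter_lt hx rfl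
  have hrank : #{y ∈ s | y < x} < k := not_le.1 fun h => hne _ h hlt hxt
  rw [← hxt]
  exact nth_lt_nth hrank hk

lemma le_nth_card_sub_one (hx : x ∈ s) : x ≤ Nat.nth (· ∈ s) (#s - 1) := by
  have hlt := card_filter_lt_lt_card hx
  rw [← nth_eq_of_card_filter_lt hx rfl]
  exact nth_le_nth (by omega) (by omega)

lemma add_one_le_nth (h0 : 0 ∉ s) (hk : k < #s) : k + 1 ≤ Nat.nth (· ∈ s) k := by
  have hsub : {y ∈ s | y < Nat.nth (· ∈ s) k} ⊆ Ico 1 (Nat.nth (· ∈ s) k) := by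
    intro y hy
    simp only [mem_filter, mem_Ico] at hy ⊢
    exact ⟨Nat.one_le_iff_ne_zero.2 (by rintro rfl; exact h0 hy.1), hy.2⟩
  have hne : Nat.nth (· ∈ s) k ≠ 0 := fun h => h0 (h ▸ nth_mem hk)
  have := card_le_card hsub
  rw [card_filter_lt_nth hk, Nat.card_Ico] at this
  omega

lemma card_filter_lt_eq_card_sdiff_add (hts : t ⊆ s) (hlt : ∀ x ∈ s \ t, ∀ y ∈ t, x < y)
    (hy : y ∈ t) : #{x ∈ s | x < y} = #(s \ t) + #{x ∈ t | x < y} := by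
  rw [← card_union_of_disjoint (disjoint_sdiff_self_left.mono_right (filter_subset _ _))]
  congr 1
  ext x
  simp only [mem_filter, mem_union, mem_sdiff]
  constructor
  · rintro ⟨hxs, hxy⟩
    by_cases hxt : x ∈ t
    · exact Or.inr ⟨hxt, hxy⟩
    · exact Or.inl ⟨hxs, hxt⟩
  · rintro (⟨hxs, hxt⟩ | ⟨hxt, hxy⟩)
    · exact ⟨hxs, hlt x (mem_sdiff.2 ⟨hxs, hxt⟩) y hy⟩
    · exact ⟨hts hxt, hxy⟩

end KthSmallest

section Largest

variable {s X : Finset ℕ} {k x y : ℕ}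

noncomputable def largest (s : Finset ℕ) (k : ℕ) : Finset ℕ :=
  (Ico (#s - k) #s).image (Nat.nth (· ∈ s))

lemma largest_subset : largest s k ⊆ s := by
  intro x hx
  obtain ⟨t, ht, rfl⟩ := mem_image.1 hx
  exact nth_mem (mem_Ico.1 ht).2

lemma card_largest (hk : k ≤ #s) : #(largest s k) = k := by
  rw [largest, card_image_of_injOn, Nat.card_Ico]
  · omega
  · intro a ha b hb hab
    simp only [coe_Ico, Set.mem_Ico] at ha hb
    by_contra hne
    rcases Nat.lt_or_gt_of_ne hne with h | h
    · exact (nth_lt_nth h hb.2).ne hab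
    · exact (nth_lt_nth h ha.2).ne' hab

lemma lt_of_mem_largest (hx : x ∈ s) (hx' : x ∉ largest s k) (hy : y ∈ largest s k) :
    x < y := by
  obtain ⟨t, ht, rfl⟩ := mem_image.1 hy
  rw [mem_Ico] at ht
  exact lt_nth_of_forall_ne hx ht.2 fun l hl hls h =>
    hx' (mem_image.2 ⟨l, mem_Ico.2 ⟨by omega, hls⟩, h⟩)

lemma eq_largest (hX : X ⊆ s) (hup : ∀ w ∈ X, ∀ z ∈ s, z ∉ X → z < w) :
    X = largest s #X := by
  have hcard := card_largest (card_le_card hX)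
  by_contra hne
  obtain ⟨w, hwX, hwL⟩ : ∃ w ∈ X, w ∉ largest s #X := by
    by_contra! h
    exact hne (eq_of_subset_of_card_le h hcard.le)
  obtain ⟨z, hzL, hzX⟩ : ∃ z ∈ largest s #X, z ∉ X := by
    by_contra! h
    exact hne (eq_of_subset_of_card_le h hcard.ge).symm
  exact (hup w hwX z (largest_subset hzL) hzX).not_gt (lt_of_mem_largest (hX hwX) hwL hzL)

end Largest

section Carrels

variable {n : ℕ} {R : Finset ℕ} {p q c : ℕ}

-- The empty supremum `0` plays the role of the cut `q_0 = 0`.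
def prevCut (R : Finset ℕ) (q : ℕ) : ℕ := (R.filter (· < q)).sup id

lemma le_prevCut (hc : c ∈ R) (hcq : c < q) : c ≤ prevCut R q :=
  le_sup (f := id) (mem_filter.2 ⟨hc, hcq⟩)

lemma prevCut_lt (hq : 0 < q) : prevCut R q < q :=
  (Finset.sup_lt_iff hq).2 fun _ hc => (mem_filter.1 hc).2

lemma prevCut_eq_zero_or_mem (R : Finset ℕ) (q : ℕ) :
    prevCut R q = 0 ∨ prevCut R q ∈ R := by
  rcases (R.filter (· < q)).eq_empty_or_nonempty with h | h
  · left
    simp [prevCut, h]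
  · obtain ⟨c, hc, hc'⟩ := exists_mem_eq_sup _ h id
    right
    rw [prevCut, hc']
    exact (mem_filter.1 hc).1

lemma prevCut_zero : prevCut R 0 = 0 := by
  simp [prevCut]

def cuts (n : ℕ) (R : Finset ℕ) : Finset ℕ := insert 0 (insert n R)

lemma le_of_mem_cuts (hR : R ⊆ Ico 1 n) (hq : q ∈ cuts n R) : q ≤ n := by
  rcases mem_insert.1 hq with rfl | hq
  · exact Nat.zero_le n
  rcases mem_insert.1 hq with rfl | hq
  · exact le_rfl
  · exact (mem_Ico.1 (hR hq)).2.le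

lemma prevCut_mem_cuts (n : ℕ) (R : Finset ℕ) (q : ℕ) : prevCut R q ∈ cuts n R := by
  rcases prevCut_eq_zero_or_mem R q with h | h
  · rw [h]; exact mem_insert_self _ _
  · exact mem_insert_of_mem (mem_insert_of_mem h)

lemma lt_carrelEnd (i : Fin n) : i.val < carrelEnd n R i :=
  (mem_filter.1 (min'_mem _ _)).2

lemma carrelEnd_mem (i : Fin n) : carrelEnd n R i ∈ insert n R :=
  (mem_filter.1 (min'_mem _ _)).1

lemma carrelEnd_le {i : Fin n} (hq : q ∈ insert n R) (hiq : i.val < q) : carrelEnd n R i ≤ q :=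
  min'_le _ _ (mem_filter.2 ⟨hq, hiq⟩)

lemma carrelEnd_le_n (i : Fin n) : carrelEnd n R i ≤ n :=
  carrelEnd_le (mem_insert_self n R) i.isLt

lemma carrelEnd_mem_cuts (i : Fin n) : carrelEnd n R i ∈ cuts n R :=
  mem_insert_of_mem (carrelEnd_mem i)

lemma prevCut_carrelEnd_le (i : Fin n) : prevCut R (carrelEnd n R i) ≤ i.val :=
  Finset.sup_le fun c hc => by
    obtain ⟨hcR, hcE⟩ := mem_filter.1 hc
    by_contra! h
    exact (carrelEnd_le (mem_insert_of_mem hcR) h).not_gt hcE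

lemma carrelEnd_eq {i : Fin n} (hq : q ∈ insert n R) (hqn : q ≤ n) (hpi : prevCut R q ≤ i.val)
    (hiq : i.val < q) : carrelEnd n R i = q := by
  refine le_antisymm (carrelEnd_le hq hiq) (not_lt.1 fun h => ?_)
  rcases mem_insert.1 (carrelEnd_mem (R := R) i) with h' | h'
  · omega
  · exact (lt_carrelEnd i).not_ge ((le_prevCut h' h).trans hpi)

lemma carrelEnd_succ {i j : Fin n} (hij : j.val = i.val + 1) (hi : i.val + 1 ∉ R) :
    carrelEnd n R j = carrelEnd n R i := by
  have hE := carrelEnd_mem (R := R) i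
  have hjE : j.val < carrelEnd n R i := by
    refine lt_of_le_of_ne (hij ▸ lt_carrelEnd i) fun h => ?_
    rcases mem_insert.1 hE with h' | h'
    · exact j.isLt.ne (h.trans h')
    · exact hi (hij ▸ h ▸ h')
  exact carrelEnd_eq hE (carrelEnd_le_n i) ((prevCut_carrelEnd_le i).trans (by omega)) hjE

lemma sameCarrel_of_prevCut_le {i j : Fin n} (hpi : prevCut R q ≤ i.val) (hjq : j.val < q) :
    SameCarrel R i j :=
  fun c hc h => (le_prevCut hc (h.2.trans_lt hjq)).not_gt (by omega)

lemma lt_of_sameCarrel {ν : Fin n → ℕ} (hinc : IsRIncr n R ν) {i j : Fin n}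
    (hij : i < j) (hs : SameCarrel R i j) : ν i < ν j := by
  obtain ⟨d, hd⟩ : ∃ d, j.val = i.val + d + 1 := ⟨j.val - i.val - 1, by omega⟩
  induction d generalizing j with
  | zero => exact hinc i j (by omega) fun h => hs _ h ⟨le_rfl, by omega⟩
  | succ d ih =>
    let k : Fin n := ⟨i.val + d + 1, by omega⟩
    have hik : ν i < ν k :=
      ih (Fin.lt_def.2 (by simp [k])) (fun c hc h => hs c hc ⟨h.1, by simp [k] at h; omega⟩) rfl
    refine hik.trans (hinc k j (by simp [k]; omega) fun h => hs _ h ⟨?_, ?_⟩) <;>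
      simp only [k] <;> omega

def block (n p q : ℕ) : Finset (Fin n) := {j | p ≤ j.val ∧ j.val < q}

lemma mem_block {i : Fin n} : i ∈ block n p q ↔ p ≤ i.val ∧ i.val < q := by
  simp [block]

lemma card_block (hq : q ≤ n) : #(block n p q) = q - p := by
  rw [← Nat.card_Ico p q, ← card_map Fin.valEmbedding]
  congr 1
  ext x
  simp only [mem_map, mem_block, Fin.valEmbedding_apply, mem_Ico]
  exact ⟨fun ⟨i, hi, hix⟩ => hix ▸ hi, fun hx => ⟨⟨x, by omega⟩, hx, rfl⟩⟩

lemma strictMonoOn_block {ν : Fin n → ℕ} (hinc : IsRIncr n R ν) (q : ℕ) :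
    StrictMonoOn ν (block n (prevCut R q) q) := fun _ hi _ hj hij =>
  lt_of_sameCarrel hinc hij
    (sameCarrel_of_prevCut_le (mem_block.1 hi).1 (mem_block.1 hj).2)

end Carrels

section BlockImage

variable {n p q : ℕ} {ν : Fin n → ℕ}

def blockImage (ν : Fin n → ℕ) (p q : ℕ) : Finset ℕ := (block n p q).image ν

lemma mem_blockImage {v : ℕ} :
    v ∈ blockImage ν p q ↔ ∃ i : Fin n, (p ≤ i.val ∧ i.val < q) ∧ ν i = v := by
  simp [blockImage, mem_block]

lemma card_blockImage (hν : StrictMonoOn ν (block n p q)) (hq : q ≤ n) :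
    #(blockImage ν p q) = q - p := by
  rw [blockImage, card_image_of_injOn hν.injOn, card_block hq]

lemma card_filter_blockImage_lt (hν : StrictMonoOn ν (block n p q)) {i : Fin n}
    (hi : i ∈ block n p q) : #{y ∈ blockImage ν p q | y < ν i} = i.val - p := by
  obtain ⟨hpi, hiq⟩ := mem_block.1 hi
  have hsub : (block n p i.val : Set (Fin n)) ⊆ block n p q := fun j hj => by
    rw [mem_coe, mem_block] at hj ⊢
    omega
  rw [← card_blockImage (hν.mono hsub) i.isLt.le]
  congr 1
  ext v
  simp only [mem_filter, mem_blockImage]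
  constructor
  · rintro ⟨⟨j, hj, rfl⟩, hlt⟩
    refine ⟨j, ⟨hj.1, ?_⟩, rfl⟩
    by_contra! h
    exact hlt.not_ge (hν.monotoneOn hi (mem_block.2 hj) h)
  · rintro ⟨j, hj, rfl⟩
    exact ⟨⟨j, ⟨hj.1, hj.2.trans hiq⟩, rfl⟩,
      hν (mem_block.2 ⟨hj.1, hj.2.trans hiq⟩) hi (Fin.lt_def.2 hj.2)⟩

lemma nth_blockImage (hν : StrictMonoOn ν (block n p q)) {i : Fin n} (hi : i ∈ block n p q) :
    Nat.nth (· ∈ blockImage ν p q) (i.val - p) = ν i :=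
  nth_eq_of_card_filter_lt (mem_image_of_mem ν hi) (card_filter_blockImage_lt hν hi)

end BlockImage

section Perm

variable {n : ℕ} {R : Finset ℕ} {π : Equiv.Perm (Fin n)} {p q : ℕ}

-- `{π_1, …, π_q}`, with values shifted to `1, …, n` as in `rankTuple`.
def vals (π : Equiv.Perm (Fin n)) (q : ℕ) : Finset ℕ :=
  (univ.filter fun j : Fin n => j.val < q).image fun j => (π j).val + 1

lemma mem_vals {v : ℕ} : v ∈ vals π q ↔ ∃ j : Fin n, j.val < q ∧ (π j).val + 1 = v := by
  simp [vals]

lemma vals_eq_blockImage : vals π q = blockImage (fun j => (π j).val + 1) 0 q := by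
  ext v
  simp [mem_vals, mem_blockImage]

lemma card_vals (hq : q ≤ n) : #(vals π q) = q := by
  rw [vals_eq_blockImage, blockImage, card_image_of_injective, card_block hq, Nat.sub_zero]
  intro i j h
  exact π.injective (Fin.ext (by simpa using h))

lemma vals_subset_Icc : vals π q ⊆ Icc 1 n := by
  intro v hv
  obtain ⟨j, -, rfl⟩ := mem_vals.1 hv
  simp only [mem_Icc]
  omega

lemma vals_mono (hpq : p ≤ q) : vals π p ⊆ vals π q := by
  intro v hv
  obtain ⟨j, hj, rfl⟩ := mem_vals.1 hv
  exact mem_vals.2 ⟨j, by omega, rfl⟩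

lemma mem_vals_iff_lt {j : Fin n} : (π j).val + 1 ∈ vals π q ↔ j.val < q := by
  refine ⟨fun h => ?_, fun h => mem_vals.2 ⟨j, h, rfl⟩⟩
  obtain ⟨j', hj', h'⟩ := mem_vals.1 h
  rwa [← π.injective (Fin.ext (by omega) : π j' = π j)]

lemma exists_eq_of_not_mem_vals {v : ℕ} (hv : v ∈ Icc 1 n) (h : v ∉ vals π q) :
    ∃ c : Fin n, q ≤ c.val ∧ (π c).val + 1 = v := by
  rw [mem_Icc] at hv
  refine ⟨π.symm ⟨v - 1, by omega⟩, ?_, by simp; omega⟩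
  by_contra! hc
  exact h (mem_vals.2 ⟨_, hc, by simp; omega⟩)

lemma vals_sdiff_vals :
    vals π q \ vals π p = blockImage (fun j => (π j).val + 1) p q := by
  ext v
  simp only [mem_sdiff, mem_blockImage]
  constructor
  · rintro ⟨hq, hp⟩
    obtain ⟨j, hj, rfl⟩ := mem_vals.1 hq
    exact ⟨j, ⟨not_lt.1 fun h => hp (mem_vals_iff_lt.2 h), hj⟩, rfl⟩
  · rintro ⟨j, hj, rfl⟩
    exact ⟨mem_vals_iff_lt.2 hj.2, fun h => (mem_vals_iff_lt.1 h).not_ge hj.1⟩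

lemma rankTuple_eq (i : Fin n) :
    rankTuple n R π i = Nat.nth (· ∈ vals π (carrelEnd n R i)) i.val := by
  rw [rankTuple, Nat.nth_eq_getD_sort (p := (· ∈ vals π (carrelEnd n R i)))
    (vals π (carrelEnd n R i)).finite_toSet]
  simp only [finite_toSet_toFinset]
  rfl

lemma isRIncr_of_isRPerm (hπ : IsRPerm n R π) : IsRIncr n R fun j => (π j).val + 1 :=
  fun i j hij hi => Nat.add_lt_add_right (hπ i j hij hi) 1

end Perm

-- For `C = vals π p`, `D = vals π q` with consecutive cuts `p < q`, this forbids
-- `π_b < π_c < π_a` with `a < p ≤ b < q ≤ c`.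
def StepAvoids (C D : Finset ℕ) : Prop :=
  ∀ x ∈ C, ∀ y ∈ D \ C, ∀ z, 0 < z → z ∉ D → y < z → x < z

section Avoidance

variable {n : ℕ} {R : Finset ℕ} {π : Equiv.Perm (Fin n)}

lemma rAvoids312_iff :
    RAvoids312 n R π ↔ ∀ q ∈ insert n R, StepAvoids (vals π (prevCut R q)) (vals π q) := by
  constructor
  · intro hav q hq x hx y hy z hz hzq hyz
    by_contra! hzx
    obtain ⟨a, ha, rfl⟩ := mem_vals.1 hx
    obtain ⟨hyq, hyp⟩ := mem_sdiff.1 hy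
    obtain ⟨b, hb, rfl⟩ := mem_vals.1 hyq
    obtain ⟨c, hc, rfl⟩ := exists_eq_of_not_mem_vals (mem_Icc.2 ⟨hz, by omega⟩) hzq
    have hpb : prevCut R q ≤ b.val := not_lt.1 fun h => hyp (mem_vals_iff_lt.2 h)
    have hzx' : (π c).val + 1 ≠ (π a).val + 1 := fun h =>
      hzq (h ▸ vals_mono (hpb.trans hb.le) (mem_vals_iff_lt.2 ha))
    have hpR : prevCut R q ∈ R := (prevCut_eq_zero_or_mem R q).resolve_left (by omega)
    have hqR : q ∈ R := (mem_insert.1 hq).resolve_left (by omega)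
    exact hav ⟨a, b, c, Fin.lt_def.2 (by omega), Fin.lt_def.2 (by omega),
      ⟨_, hpR, by omega, hpb⟩, ⟨q, hqR, by omega, hc⟩,
      Fin.lt_def.2 (by omega), Fin.lt_def.2 (by omega), Fin.lt_def.2 (by omega)⟩
  · rintro h ⟨a, b, c, -, -, ⟨q₁, hq₁, haq₁, hq₁b⟩, ⟨q₂, hq₂, hbq₂, hq₂c⟩, -, hπbc, hπca⟩
    have hE := carrelEnd_mem (R := R) b
    have hP := prevCut_carrelEnd_le (R := R) b
    have hq₁P : q₁ ≤ prevCut R (carrelEnd n R b) :=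
      le_prevCut hq₁ (by have := lt_carrelEnd (R := R) b; omega)
    have hEq₂ : carrelEnd n R b ≤ q₂ := carrelEnd_le (mem_insert_of_mem hq₂) (by omega)
    have := h _ hE _ (mem_vals_iff_lt.2 (show a.val < _ by omega)) _
      (mem_sdiff.2 ⟨mem_vals_iff_lt.2 (lt_carrelEnd b),
        fun h' => (mem_vals_iff_lt.1 h').not_ge hP⟩)
      _ (Nat.succ_pos _) (fun h' => (mem_vals_iff_lt.1 h').not_ge (by omega))
      (Nat.add_lt_add_right (Fin.lt_def.1 hπbc) 1)
    exact absurd (Fin.lt_def.1 hπca) (by omega)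

end Avoidance

section RankTupleProperties

variable {n : ℕ} {R : Finset ℕ} {π : Equiv.Perm (Fin n)}

lemma isUpperTuple_rankTuple : IsUpperTuple n (rankTuple n R π) := by
  intro i
  have hi : i.val < #(vals π (carrelEnd n R i)) := by
    rw [card_vals (carrelEnd_le_n i)]
    exact lt_carrelEnd i
  rw [rankTuple_eq]
  exact ⟨add_one_le_nth (fun h => by simpa using vals_subset_Icc h) hi,
    (mem_Icc.1 (vals_subset_Icc (nth_mem hi))).2⟩

lemma isRIncr_rankTuple : IsRIncr n R (rankTuple n R π) := by
  intro i j hij hi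
  have hE := carrelEnd_succ (R := R) hij hi
  rw [rankTuple_eq, rankTuple_eq, hE]
  refine nth_lt_nth (by omega) ?_
  rw [card_vals (carrelEnd_le_n i), ← hE]
  exact lt_carrelEnd j

lemma Icc_nth_subset_of_stepAvoids {A B : Finset ℕ} {m : ℕ} (hav : StepAvoids A B)
    (hm : m ∈ A) (hlt : #A < #B) : Icc (Nat.nth (· ∈ B) #A) m ⊆ B := by
  set g := Nat.nth (· ∈ B) #A
  have hg : g ∈ B := nth_mem hlt
  intro v hv
  rw [mem_Icc] at hv
  by_contra hvB
  have hgv : g < v := lt_of_le_of_ne hv.1 fun h => hvB (h ▸ hg)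
  -- `B` has `#A` elements below `g`, but `A` has at most `#A - 1` of them, as `g < m`.
  obtain ⟨y, hy, hyA⟩ : ∃ y ∈ {y ∈ B | y < g}, y ∉ A := by
    by_contra! h
    have hsub : {y ∈ B | y < g} ⊆ A.erase m := fun y hy =>
      mem_erase.2 ⟨fun hym => by have := (mem_filter.1 hy).2; omega, h y hy⟩
    have := card_le_card hsub
    rw [card_filter_lt_nth hlt, card_erase_of_mem hm] at this
    have := card_pos.2 ⟨m, hm⟩
    omega
  obtain ⟨hyB, hyg⟩ := mem_filter.1 hy
  have := hav m hm y (mem_sdiff.2 ⟨hyB, hyA⟩) v (by omega) hvB (by omega)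
  omega

lemma nth_add_of_Icc_subset {B : Finset ℕ} {k t : ℕ} (hk : k < #B)
    (hI : Icc (Nat.nth (· ∈ B) k) (Nat.nth (· ∈ B) k + t) ⊆ B) :
    Nat.nth (· ∈ B) (k + t) = Nat.nth (· ∈ B) k + t ∧ k + t < #B := by
  set g := Nat.nth (· ∈ B) k
  have hgt : g + t ∈ B := hI (mem_Icc.2 ⟨by omega, le_rfl⟩)
  have hsplit : {y ∈ B | y < g + t} = {y ∈ B | y < g} ∪ Ico g (g + t) := by
    ext y
    simp only [mem_filter, mem_union, mem_Ico]
    constructor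
    · rintro ⟨hyB, hy⟩
      by_cases hyg : y < g
      · exact Or.inl ⟨hyB, hyg⟩
      · exact Or.inr ⟨by omega, hy⟩
    · rintro (⟨hyB, hy⟩ | hy)
      · exact ⟨hyB, by omega⟩
      · exact ⟨hI (mem_Icc.2 ⟨hy.1, hy.2.le⟩), hy.2⟩
  have hcount : #{y ∈ B | y < g + t} = k + t := by
    rw [hsplit, card_union_of_disjoint, card_filter_lt_nth hk, Nat.card_Ico]
    · omega
    · exact disjoint_left.2 fun y hy hy' => by
        simp only [mem_filter, mem_Ico] at hy hy'
        omega
  exact ⟨nth_eq_of_card_filter_lt hgt hcount, hcount ▸ card_filter_lt_lt_card hgt⟩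

lemma gaplessCond_rankTuple (hav : RAvoids312 n R π) : GaplessCond n R (rankTuple n R π) := by
  intro q hq hq0 hqn hdrop
  set E := carrelEnd n R ⟨q, hqn⟩
  have hqE : q < E := lt_carrelEnd (⟨q, hqn⟩ : Fin n)
  have hEn : E ≤ n := carrelEnd_le_n _
  have hEmem : E ∈ insert n R := carrelEnd_mem _
  have hpE : prevCut R E = q :=
    le_antisymm (prevCut_carrelEnd_le _) (le_prevCut hq hqE)
  have hA : #(vals π q) = q := card_vals hqn.le
  have hB : #(vals π E) = E := card_vals hEn
  have hγq : rankTuple n R π ⟨q, hqn⟩ = Nat.nth (· ∈ vals π E) q := rankTuple_eq _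
  have hγq' : rankTuple n R π ⟨q - 1, by omega⟩ = Nat.nth (· ∈ vals π q) (q - 1) := by
    rw [rankTuple_eq, carrelEnd_eq (mem_insert_of_mem hq) hqn.le
      (by simp only; have := prevCut_lt (R := R) hq0; omega) (by simp only; omega)]
  have hav' := rAvoids312_iff.1 hav E hEmem
  rw [hpE] at hav'
  have hm : Nat.nth (· ∈ vals π q) (q - 1) ∈ vals π q := nth_mem (by omega)
  have hI := Icc_nth_subset_of_stepAvoids hav' hm (by omega)
  rw [hA, ← hγq, ← hγq'] at hI
  have hrun : ∀ t ≤ rankTuple n R π ⟨q - 1, by omega⟩ - rankTuple n R π ⟨q, hqn⟩,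
      Nat.nth (· ∈ vals π E) (q + t) = rankTuple n R π ⟨q, hqn⟩ + t ∧ q + t < E :=
    fun t ht => by
    have := nth_add_of_Icc_subset (B := vals π E) (k := q) (t := t) (by omega)
      (by rw [← hγq]; exact (Icc_subset_Icc_right (by omega)).trans hI)
    rwa [hB, ← hγq] at this
  refine ⟨by have := (hrun _ le_rfl).2; omega, fun t ht htn => ?_⟩
  have hEt : carrelEnd n R ⟨q + t, htn⟩ = E := carrelEnd_eq hEmem hEn (by simp only; omega)
    (by simp only; have := (hrun t (by omega)).2; omega)
  have hg := (isUpperTuple_rankTuple (R := R) (π := π) ⟨q, hqn⟩).1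
  rw [rankTuple_eq, hEt, (hrun t (by omega)).1]
  omega

end RankTupleProperties

section Step

variable {C D T : Finset ℕ} {low : ℕ}

-- With `low = min T`, avoidance forces the value set at the next cut to be of this form.
noncomputable def step (C T : Finset ℕ) (low : ℕ) : Finset ℕ :=
  C ∪ T ∪ largest (Ico 1 low \ C) #(C ∩ T)

lemma subset_step_left : C ⊆ step C T low :=
  subset_union_left.trans subset_union_left

lemma subset_step_right : T ⊆ step C T low :=
  subset_union_right.trans subset_union_left

lemma eq_step_of_stepAvoids (hCD : C ⊆ D) (hTD : T ⊆ D) (h0 : 0 ∉ D) (hcard : #D = #C + #T)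
    (hlow : ∀ x ∈ D \ T, x < low) (hT : ∀ y ∈ T, low ≤ y) (hav : StepAvoids C D) :
    D = step C T low := by
  set X := D \ (C ∪ T)
  have hX : X ⊆ Ico 1 low \ C := fun x hx => by
    obtain ⟨hxD, hxCT⟩ := mem_sdiff.1 hx
    rw [mem_union, not_or] at hxCT
    refine mem_sdiff.2 ⟨mem_Ico.2 ⟨?_, hlow x (mem_sdiff.2 ⟨hxD, hxCT.2⟩)⟩, hxCT.1⟩
    exact Nat.one_le_iff_ne_zero.2 fun h => h0 (h ▸ hxD)
  have hXcard : #X = #(C ∩ T) := by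
    have := card_union_add_card_inter C T
    have : #X = #D - #(C ∪ T) := card_sdiff_of_subset (union_subset hCD hTD)
    omega
  -- A missing number above some `w ∈ X` would form a pattern with an old value in `C ∩ T`.
  have hup : ∀ w ∈ X, ∀ z ∈ Ico 1 low \ C, z ∉ X → z < w := by
    intro w hw z hz hzX
    obtain ⟨hzI, hzC⟩ := mem_sdiff.1 hz
    rw [mem_Ico] at hzI
    have hzD : z ∉ D := fun hzD => hzX (mem_sdiff.2 ⟨hzD, by
      simp only [mem_union, not_or]
      exact ⟨hzC, fun h => (hT z h).not_gt hzI.2⟩⟩)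
    obtain ⟨x, hx⟩ : (C ∩ T).Nonempty := card_pos.1 (hXcard ▸ card_pos.2 ⟨w, hw⟩)
    obtain ⟨hwD, hwCT⟩ := mem_sdiff.1 hw
    by_contra! hwz
    have hwz' : w < z := lt_of_le_of_ne hwz fun h => hzX (h ▸ hw)
    have := hav x (mem_inter.1 hx).1 w (mem_sdiff.2 ⟨hwD, fun h => hwCT (mem_union_left _ h)⟩)
      z hzI.1 hzD hwz'
    have := hT x (mem_inter.1 hx).2
    omega
  rw [step, ← hXcard, ← eq_largest hX hup, union_sdiff_of_subset (union_subset hCD hTD)]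

-- `mem_of_le` is where gaplessness enters: `T` contains every integer from `low` up to `max C`.
structure StepData (C T : Finset ℕ) (low : ℕ) : Prop where
  zero_not_mem : 0 ∉ C
  card_lt : #C < low
  le_of_mem : ∀ y ∈ T, low ≤ y
  mem_of_le : ∀ z, low ≤ z → ∀ x ∈ C, z ≤ x → z ∈ T

namespace StepData

lemma lt_of_mem_step {x : ℕ} (h : StepData C T low) (hx : x ∈ step C T low) (hxT : x ∉ T) :
    x < low := by
  rcases mem_union.1 hx with hx | hx
  · rcases mem_union.1 hx with hx | hx
    · exact not_le.1 fun hle => hxT (h.mem_of_le x hle x hx le_rfl)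
    · exact absurd hx hxT
  · exact (mem_Ico.1 (mem_sdiff.1 (largest_subset hx)).1).2

lemma zero_not_mem_step (h : StepData C T low) : 0 ∉ step C T low := fun h0 => by
  rcases mem_union.1 h0 with h0 | h0
  · rcases mem_union.1 h0 with h0 | h0
    · exact h.zero_not_mem h0
    · exact (h.le_of_mem 0 h0).not_gt (by have := h.card_lt; omega)
  · exact (mem_Ico.1 (mem_sdiff.1 (largest_subset h0)).1).1.not_gt Nat.zero_lt_one

lemma card_step (h : StepData C T low) : #(step C T low) = #C + #T := by
  have hinter : Ico 1 low ∩ C = C \ T := by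
    ext x
    simp only [mem_inter, mem_Ico, mem_sdiff]
    constructor
    · rintro ⟨⟨-, hx⟩, hxC⟩
      exact ⟨hxC, fun hxT => (h.le_of_mem x hxT).not_gt hx⟩
    · rintro ⟨hxC, hxT⟩
      refine ⟨⟨Nat.one_le_iff_ne_zero.2 fun h0 => h.zero_not_mem (h0 ▸ hxC), ?_⟩, hxC⟩
      exact not_le.1 fun hle => hxT (h.mem_of_le x hle x hxC le_rfl)
  have hM : #(C ∩ T) ≤ #(Ico 1 low \ C) := by
    have h1 := card_sdiff_add_card_inter (Ico 1 low) C
    have h2 := card_sdiff_add_card_inter C T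
    rw [hinter, Nat.card_Ico] at h1
    have := h.card_lt
    omega
  have hdisj : Disjoint (C ∪ T) (largest (Ico 1 low \ C) #(C ∩ T)) := by
    refine disjoint_left.2 fun x hxCT hxL => ?_
    obtain ⟨hxI, hxC⟩ := mem_sdiff.1 (largest_subset hxL)
    rcases mem_union.1 hxCT with hx | hx
    · exact hxC hx
    · exact (h.le_of_mem x hx).not_gt (mem_Ico.1 hxI).2
  rw [step, card_union_of_disjoint hdisj, card_largest hM]
  have := card_union_add_card_inter C T
  omega

lemma stepAvoids_step (h : StepData C T low) : StepAvoids C (step C T low) := by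
  intro x hx y hy z hz hzD hyz
  have hzC : z ∉ C := fun h => hzD (subset_step_left h)
  by_contra! hzx
  rcases lt_or_ge z low with hzl | hzl
  · obtain ⟨hyD, hyC⟩ := mem_sdiff.1 hy
    rcases mem_union.1 hyD with hy' | hy'
    · rcases mem_union.1 hy' with hy' | hy'
      · exact hyC hy'
      · exact (h.le_of_mem y hy').not_gt (hyz.trans hzl)
    · have hzM : z ∈ Ico 1 low \ C := mem_sdiff.2 ⟨mem_Ico.2 ⟨hz, hzl⟩, hzC⟩
      exact (lt_of_mem_largest hzM (fun h => hzD (mem_union_right _ h)) hy').not_gt hyz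
  · exact hzD (subset_step_right (h.mem_of_le z hzl x hx hzx))

end StepData

end Step

section Chain

variable {n : ℕ} {R : Finset ℕ} {γ : Fin n → ℕ} {p q : ℕ}

-- The value sets at the cuts of the preimage of `γ`.
noncomputable def chain (R : Finset ℕ) (γ : Fin n → ℕ) (q : ℕ) : Finset ℕ :=
  if q = 0 then ∅ else
    step (chain R γ (prevCut R q)) (blockImage γ (prevCut R q) q)
      (Nat.nth (· ∈ blockImage γ (prevCut R q) q) 0)
termination_by q
decreasing_by exact prevCut_lt (Nat.pos_of_ne_zero ‹_›)

lemma chain_zero : chain R γ 0 = ∅ := by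
  rw [chain, if_pos rfl]

lemma chain_of_pos (hq : 0 < q) :
    chain R γ q = step (chain R γ (prevCut R q)) (blockImage γ (prevCut R q) q)
      (Nat.nth (· ∈ blockImage γ (prevCut R q) q) 0) := by
  rw [chain, if_neg hq.ne']

lemma mem_blockImage_of_gaplessCond (hup : IsUpperTuple n γ) (hgap : GaplessCond n R γ)
    (hp : p ∈ R) (hp0 : 0 < p) (hpn : p < n) {z : ℕ} (hz : γ ⟨p, hpn⟩ ≤ z)
    (hz' : z ≤ γ ⟨p - 1, by omega⟩) :
    z ∈ blockImage γ p (carrelEnd n R ⟨p, hpn⟩) := by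
  have hpE := lt_carrelEnd (R := R) (⟨p, hpn⟩ : Fin n)
  rw [mem_blockImage]
  rcases lt_or_ge (γ ⟨p, hpn⟩) (γ ⟨p - 1, by omega⟩) with hlt | hge
  · obtain ⟨hlen, hrun⟩ := hgap p hp hp0 hpn hlt
    have hEn := carrelEnd_le_n (R := R) (⟨p, hpn⟩ : Fin n)
    have hzp : p + (z - γ ⟨p, hpn⟩) < n := by omega
    refine ⟨⟨_, hzp⟩, ⟨by simp, by simp only; omega⟩, ?_⟩
    have := (hup ⟨p, hpn⟩).1
    rw [hrun _ (by omega) hzp]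
    omega
  · exact ⟨⟨p, hpn⟩, ⟨le_rfl, hpE⟩, by omega⟩

def ChainSpec (R : Finset ℕ) (γ : Fin n → ℕ) (q : ℕ) : Prop :=
  #(chain R γ q) = q ∧ chain R γ q ⊆ Icc 1 n ∧
    ∀ i ∈ block n (prevCut R q) q, Nat.nth (· ∈ chain R γ q) i.val = γ i

lemma nth_blockImage_zero (hinc : IsRIncr n R γ) (hp : prevCut R q = p) (hpq : p < q)
    (hpn : p < n) : Nat.nth (· ∈ blockImage γ p q) 0 = γ ⟨p, hpn⟩ := by
  subst hp
  simpa using nth_blockImage (strictMonoOn_block hinc q) (i := ⟨_, hpn⟩)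
    (mem_block.2 ⟨le_rfl, hpq⟩)

lemma stepData_chain (hup : IsUpperTuple n γ) (hinc : IsRIncr n R γ) (hgap : GaplessCond n R γ)
    (hq : q ∈ insert n R) (hqn : q ≤ n) (hp : prevCut R q = p) (hpq : p < q)
    (hspec : ChainSpec R γ p) :
    StepData (chain R γ p) (blockImage γ p q) (γ ⟨p, by omega⟩) := by
  have hpn : p < n := by omega
  obtain ⟨hcard, hIcc, hnth⟩ := hspec
  refine ⟨fun h0 => by simpa using hIcc h0,
    by have := (hup ⟨p, hpn⟩).1; simp only at this; omega, ?_, ?_⟩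
  · intro y hy
    obtain ⟨i, hi, rfl⟩ := mem_blockImage.1 hy
    exact (hp ▸ strictMonoOn_block hinc q).monotoneOn (mem_block.2 ⟨le_rfl, hpq⟩)
      (mem_block.2 hi) (Fin.le_def.2 hi.1)
  · intro z hz x hx hzx
    have hp0 : 0 < p := hcard ▸ card_pos.2 ⟨x, hx⟩
    have hpR : p ∈ R := hp ▸ (prevCut_eq_zero_or_mem R q).resolve_left (by omega)
    have hmax : x ≤ γ ⟨p - 1, by omega⟩ := by
      have := prevCut_lt (R := R) hp0
      rw [← hnth ⟨p - 1, by omega⟩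
        (mem_block.2 ⟨by simp only; omega, by simp only; omega⟩)]
      have := le_nth_card_sub_one hx
      rwa [hcard] at this
    have hE : carrelEnd n R ⟨p, hpn⟩ = q := carrelEnd_eq hq hqn hp.le hpq
    exact hE ▸ mem_blockImage_of_gaplessCond hup hgap hpR hp0 hpn hz (hzx.trans hmax)

lemma chainSpec_of_mem_cuts (hR : R ⊆ Ico 1 n) (hup : IsUpperTuple n γ) (hinc : IsRIncr n R γ)
    (hgap : GaplessCond n R γ) : ∀ q ∈ cuts n R, ChainSpec R γ q := by
  intro q
  induction q using Nat.strong_induction_on with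
  | _ q ih =>
  intro hq
  rcases Nat.eq_zero_or_pos q with rfl | hq0
  · exact ⟨by simp [chain_zero], by simp [chain_zero],
      fun i hi => absurd (mem_block.1 hi).2 (Nat.not_lt_zero _)⟩
  have hqn := le_of_mem_cuts hR hq
  obtain ⟨p, hp⟩ : ∃ p, prevCut R q = p := ⟨_, rfl⟩
  have hpq : p < q := hp ▸ prevCut_lt hq0
  have hpn : p < n := by omega
  have hC := ih p hpq (hp ▸ prevCut_mem_cuts n R q)
  have hsd :=
    stepData_chain hup hinc hgap ((mem_insert.1 hq).resolve_left hq0.ne') hqn hp hpq hC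
  have hmono := hp ▸ strictMonoOn_block hinc q
  have hT : #(blockImage γ p q) = q - p := card_blockImage hmono hqn
  rw [ChainSpec, chain_of_pos hq0, hp, nth_blockImage_zero hinc hp hpq hpn]
  refine ⟨by rw [hsd.card_step, hT, hC.1]; omega, fun x hx => ?_, fun i hi => ?_⟩
  · by_cases hxT : x ∈ blockImage γ p q
    · obtain ⟨i, -, rfl⟩ := mem_blockImage.1 hxT
      exact mem_Icc.2 ⟨by have := (hup i).1; omega, (hup i).2⟩
    · have := hsd.lt_of_mem_step hx hxT
      have := (hup ⟨p, hpn⟩).2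
      have : x ≠ 0 := by rintro rfl; exact hsd.zero_not_mem_step hx
      exact mem_Icc.2 ⟨by omega, by omega⟩
  · have hγi : γ i ∈ blockImage γ p q := mem_image_of_mem γ hi
    apply nth_eq_of_card_filter_lt (subset_step_right hγi)
    rw [card_filter_lt_eq_card_sdiff_add subset_step_right
      (fun x hx y hy => (hsd.lt_of_mem_step (mem_sdiff.1 hx).1 (mem_sdiff.1 hx).2).trans_le
        (hsd.le_of_mem y hy)) hγi,
      card_filter_blockImage_lt hmono hi, card_sdiff_of_subset subset_step_right, hsd.card_step,
      hT, hC.1]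
    have := mem_block.1 hi
    omega

lemma chain_prevCut_subset : chain R γ (prevCut R q) ⊆ chain R γ q := by
  rcases Nat.eq_zero_or_pos q with rfl | hq0
  · rw [prevCut_zero]
  · rw [chain_of_pos hq0]
    exact subset_step_left

lemma stepAvoids_chain (hR : R ⊆ Ico 1 n) (hup : IsUpperTuple n γ) (hinc : IsRIncr n R γ)
    (hgap : GaplessCond n R γ) (hq : q ∈ insert n R) :
    StepAvoids (chain R γ (prevCut R q)) (chain R γ q) := by
  have hqc : q ∈ cuts n R := mem_insert_of_mem hq
  rcases Nat.eq_zero_or_pos q with rfl | hq0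
  · intro x hx
    simp [prevCut_zero, chain_zero] at hx
  have hpq := prevCut_lt (R := R) hq0
  have hsd := stepData_chain hup hinc hgap hq (le_of_mem_cuts hR hqc) rfl hpq
    (chainSpec_of_mem_cuts hR hup hinc hgap _ (prevCut_mem_cuts n R q))
  have hpn : prevCut R q < n := by have := le_of_mem_cuts hR hqc; omega
  rw [chain_of_pos hq0, nth_blockImage_zero hinc rfl hpq hpn]
  exact hsd.stepAvoids_step

end Chain

section Assemble

variable {n : ℕ} {R : Finset ℕ} {V : ℕ → Finset ℕ} {π π' : Equiv.Perm (Fin n)} {q : ℕ}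

-- The values (shifted by one) of the `R`-permutation whose value sets at the cuts are `V`:
-- each carrel lists its new values in increasing order.
noncomputable def assemble (R : Finset ℕ) (V : ℕ → Finset ℕ) (i : Fin n) : ℕ :=
  Nat.nth (· ∈ V (carrelEnd n R i) \ V (prevCut R (carrelEnd n R i)))
    (i.val - prevCut R (carrelEnd n R i))

lemma assemble_vals (hπ : IsRPerm n R π) (i : Fin n) :
    assemble R (vals π) i = (π i).val + 1 := by
  rw [assemble, vals_sdiff_vals]
  exact nth_blockImage (strictMonoOn_block (isRIncr_of_isRPerm hπ) _)
    (mem_block.2 ⟨prevCut_carrelEnd_le i, lt_carrelEnd i⟩)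

lemma eq_of_vals_eq (hπ : IsRPerm n R π) (hπ' : IsRPerm n R π')
    (h : ∀ q ∈ cuts n R, vals π q = vals π' q) : π = π' := by
  ext i
  have h₁ := assemble_vals hπ i
  have h₂ := assemble_vals hπ' i
  rw [assemble, h _ (carrelEnd_mem_cuts i), h _ (prevCut_mem_cuts n R _), ← assemble, h₂]
    at h₁
  omega

lemma assemble_of_mem_block (hR : R ⊆ Ico 1 n) (hq : q ∈ insert n R) {i : Fin n}
    (hi : i ∈ block n (prevCut R q) q) :
    assemble R V i = Nat.nth (· ∈ V q \ V (prevCut R q)) (i.val - prevCut R q) := by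
  rw [assemble, carrelEnd_eq hq (le_of_mem_cuts hR (mem_insert_of_mem hq)) (mem_block.1 hi).1
    (mem_block.1 hi).2]

lemma card_sdiff_prevCut (hcard : ∀ q ∈ cuts n R, #(V q) = q)
    (hmono : ∀ q, V (prevCut R q) ⊆ V q) (hq : q ∈ cuts n R) :
    #(V q \ V (prevCut R q)) = q - prevCut R q := by
  rw [card_sdiff_of_subset (hmono q), hcard q hq, hcard _ (prevCut_mem_cuts n R q)]

lemma assemble_strictMonoOn_block (hR : R ⊆ Ico 1 n) (hcard : ∀ q ∈ cuts n R, #(V q) = q)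
    (hmono : ∀ q, V (prevCut R q) ⊆ V q) (hq : q ∈ insert n R) :
    StrictMonoOn (assemble (n := n) R V) (block n (prevCut R q) q) := by
  intro i hi j hj hij
  have hi' := mem_block.1 hi
  have hj' := mem_block.1 hj
  have := card_sdiff_prevCut hcard hmono (mem_insert_of_mem hq)
  rw [assemble_of_mem_block hR hq hi, assemble_of_mem_block hR hq hj]
  exact nth_lt_nth (by rw [Fin.lt_def] at hij; omega) (by omega)

lemma image_assemble_block (hR : R ⊆ Ico 1 n) (hcard : ∀ q ∈ cuts n R, #(V q) = q)
    (hmono : ∀ q, V (prevCut R q) ⊆ V q) (hq : q ∈ insert n R) :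
    (block n (prevCut R q) q).image (assemble R V) = V q \ V (prevCut R q) := by
  have hqc : q ∈ cuts n R := mem_insert_of_mem hq
  refine eq_of_subset_of_card_le (fun v hv => ?_) ?_
  · obtain ⟨i, hi, rfl⟩ := mem_image.1 hv
    have := card_sdiff_prevCut hcard hmono hqc
    rw [assemble_of_mem_block hR hq hi]
    exact nth_mem (by have := mem_block.1 hi; omega)
  · rw [card_image_of_injOn (assemble_strictMonoOn_block hR hcard hmono hq).injOn,
      card_block (le_of_mem_cuts hR hqc), card_sdiff_prevCut hcard hmono hqc]

lemma image_assemble (hR : R ⊆ Ico 1 n) (hcard : ∀ q ∈ cuts n R, #(V q) = q)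
    (hmono : ∀ q, V (prevCut R q) ⊆ V q) :
    ∀ q ∈ cuts n R, (univ.filter fun i : Fin n => i.val < q).image (assemble R V) = V q := by
  intro q
  induction q using Nat.strong_induction_on with
  | _ q ih =>
  intro hq
  rcases Nat.eq_zero_or_pos q with rfl | hq0
  · rw [card_eq_zero.1 (hcard 0 hq)]
    simp
  have hq' : q ∈ insert n R := (mem_insert.1 hq).resolve_left hq0.ne'
  have hpq := prevCut_lt (R := R) hq0
  have hsplit : (univ.filter fun i : Fin n => i.val < q) =
      (univ.filter fun i : Fin n => i.val < prevCut R q) ∪ block n (prevCut R q) q := by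
    ext i
    simp only [mem_filter, mem_univ, true_and, mem_union, mem_block]
    omega
  rw [hsplit, image_union, ih _ hpq (prevCut_mem_cuts n R q),
    image_assemble_block hR hcard hmono hq', union_sdiff_of_subset (hmono q)]

lemma exists_isRPerm_vals_eq (hR : R ⊆ Ico 1 n) (hcard : ∀ q ∈ cuts n R, #(V q) = q)
    (hmono : ∀ q, V (prevCut R q) ⊆ V q) (hVn : V n ⊆ Icc 1 n) :
    ∃ π : Equiv.Perm (Fin n), IsRPerm n R π ∧ ∀ q ∈ cuts n R, vals π q = V q := by
  have himage := image_assemble hR hcard hmono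
  have hn : n ∈ cuts n R := mem_insert_of_mem (mem_insert_self n R)
  have huniv : (univ.filter fun i : Fin n => i.val < n) = univ := by
    ext i
    simp
  have hrange : ∀ i : Fin n, assemble R V i ∈ Icc 1 n := fun i =>
    hVn (himage n hn ▸ mem_image_of_mem _ (by simp))
  have hinj : Function.Injective (assemble (n := n) R V) := by
    rw [← Set.injOn_univ, ← coe_univ]
    apply injOn_of_card_image_eq
    rw [← huniv, himage n hn, hcard n hn, huniv, card_univ, Fintype.card_fin]
  let f : Fin n → Fin n :=
    fun i => ⟨assemble R V i - 1, by have := mem_Icc.1 (hrange i); omega⟩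
  have hf : ∀ i, (f i).val + 1 = assemble R V i := fun i => by
    have := mem_Icc.1 (hrange i)
    simp only [f]
    omega
  have hfinj : Function.Injective f := fun i j h => hinj (by rw [← hf, ← hf, h])
  refine ⟨Equiv.ofBijective f (Finite.injective_iff_bijective.1 hfinj), ?_, ?_⟩
  · intro i j hij hi
    have hE := carrelEnd_succ (R := R) hij hi
    have hlt : assemble R V i < assemble R V j :=
      assemble_strictMonoOn_block hR hcard hmono (carrelEnd_mem i)
        (mem_block.2 ⟨prevCut_carrelEnd_le i, lt_carrelEnd i⟩)
        (mem_block.2 ⟨hE ▸ prevCut_carrelEnd_le j, hE ▸ lt_carrelEnd j⟩)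
        (Fin.lt_def.2 (by omega))
    rw [Fin.lt_def]
    simp only [Equiv.ofBijective_apply]
    have := hf i
    have := hf j
    omega
  · intro q hq
    rw [← himage q hq, vals]
    exact image_congr fun i _ => hf i

end Assemble

section Bijection

variable {n : ℕ} {R : Finset ℕ}

lemma vals_eq_chain (hR : R ⊆ Ico 1 n) {π : Equiv.Perm (Fin n)}
    (hav : RAvoids312 n R π) : ∀ q ∈ cuts n R, vals π q = chain R (rankTuple n R π) q := by
  intro q
  induction q using Nat.strong_induction_on with
  | _ q ih =>
  intro hq
  rcases Nat.eq_zero_or_pos q with rfl | hq0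
  · rw [chain_zero, ← card_eq_zero, card_vals (Nat.zero_le n)]
  have hqn := le_of_mem_cuts hR hq
  have hq' : q ∈ insert n R := (mem_insert.1 hq).resolve_left hq0.ne'
  obtain ⟨p, hp⟩ : ∃ p, prevCut R q = p := ⟨_, rfl⟩
  have hpq : p < q := hp ▸ prevCut_lt hq0
  have hpn : p < n := by omega
  have hinc : IsRIncr n R (rankTuple n R π) := isRIncr_rankTuple
  have hmono := hp ▸ strictMonoOn_block hinc q
  have hD : #(vals π q) = q := card_vals hqn
  have hγ : ∀ i ∈ block n p q, rankTuple n R π i = Nat.nth (· ∈ vals π q) i.val :=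
    fun i hi => by
      rw [rankTuple_eq, carrelEnd_eq hq' hqn (hp ▸ (mem_block.1 hi).1) (mem_block.1 hi).2]
  have hp_mem : (⟨p, hpn⟩ : Fin n) ∈ block n p q := mem_block.2 ⟨le_rfl, hpq⟩
  rw [chain_of_pos hq0, hp, ← ih p hpq (hp ▸ prevCut_mem_cuts n R q),
    nth_blockImage_zero hinc hp hpq hpn]
  refine eq_step_of_stepAvoids (vals_mono hpq.le) (fun v hv => ?_)
    (fun h => by simpa using vals_subset_Icc h)
    (by rw [hD, card_vals hpn.le, card_blockImage hmono hqn]; omega) (fun x hx => ?_)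
    (fun y hy => ?_) (hp ▸ rAvoids312_iff.1 hav q hq')
  · obtain ⟨i, hi, rfl⟩ := mem_blockImage.1 hv
    rw [hγ i (mem_block.2 hi)]
    exact nth_mem (by rw [hD]; exact hi.2)
  · obtain ⟨hxD, hxT⟩ := mem_sdiff.1 hx
    rw [hγ _ hp_mem]
    refine lt_nth_of_forall_ne hxD (by rw [hD]; exact hpq) fun l hpl hl hlx => ?_
    rw [hD] at hl
    refine hxT (mem_blockImage.2 ⟨⟨l, by omega⟩, ⟨hpl, hl⟩, ?_⟩)
    rw [hγ _ (mem_block.2 ⟨hpl, hl⟩)]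
    exact hlx
  · obtain ⟨i, hi, rfl⟩ := mem_blockImage.1 hy
    exact hmono.monotoneOn hp_mem (mem_block.2 hi) (Fin.le_def.2 hi.1)

lemma exists_rankTuple_eq (hR : R ⊆ Ico 1 n) {γ : Fin n → ℕ} (hup : IsUpperTuple n γ)
    (hinc : IsRIncr n R γ) (hgap : GaplessCond n R γ) :
    ∃ π : Equiv.Perm (Fin n),
      (IsRPerm n R π ∧ RAvoids312 n R π) ∧ rankTuple n R π = γ := by
  have hspec := chainSpec_of_mem_cuts hR hup hinc hgap
  obtain ⟨π, hπ, hvals⟩ := exists_isRPerm_vals_eq hR (fun q hq => (hspec q hq).1)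
    (fun _ => chain_prevCut_subset) (hspec n (mem_insert_of_mem (mem_insert_self n R))).2.1
  refine ⟨π, ⟨hπ, rAvoids312_iff.2 fun q hq => ?_⟩, funext fun i => ?_⟩
  · rw [hvals q (mem_insert_of_mem hq), hvals _ (prevCut_mem_cuts n R q)]
    exact stepAvoids_chain hR hup hinc hgap hq
  · rw [rankTuple_eq, hvals _ (carrelEnd_mem_cuts i)]
    exact (hspec _ (carrelEnd_mem_cuts i)).2.2 i
      (mem_block.2 ⟨prevCut_carrelEnd_le i, lt_carrelEnd i⟩)

end Bijection

end RankTuple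

/-- The restriction of the rank R-tuple map Ψ_R to the set of R-312-avoiding
R-permutations is a bijection onto the set of gapless R-tuples. -/
theorem stmt7 (n : ℕ) (R : Finset ℕ) (hR : R ⊆ Finset.Ico 1 n) :
    Set.BijOn (rankTuple n R)
      {π : Equiv.Perm (Fin n) | IsRPerm n R π ∧ RAvoids312 n R π}
      {γ : Fin n → ℕ | IsRIncrUpper n R γ ∧ GaplessCond n R γ} := by
  refine ⟨fun π hπ => ⟨⟨RankTuple.isUpperTuple_rankTuple, RankTuple.isRIncr_rankTuple⟩,
    RankTuple.gaplessCond_rankTuple hπ.2⟩, ?_, ?_⟩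
  · rintro π ⟨hπ, hav⟩ π' ⟨hπ', hav'⟩ h
    refine RankTuple.eq_of_vals_eq hπ hπ' fun q hq => ?_
    rw [RankTuple.vals_eq_chain hR hav q hq, RankTuple.vals_eq_chain hR hav' q hq, h]
  · rintro γ ⟨⟨hup, hinc⟩, hgap⟩
    exact RankTuple.exists_rankTuple_eq hR hup hinc hgap
end

section
/- An R-permutation π is R-312-avoiding if and only if its associated R-chain B (given by B_h = {π_1,...,π_{q_h}}) is R-rightmost clump deleting, i.e., for each h ∈ [r], writing b_{h+1} = min(B_{h+1} \ B_h) and m_h = max(B_h), the interval [b_{h+1}, m_h] is contained in B_{h+1}. -/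
/-- B_q = {π_1, ..., π_q} as a set of 1-based values. -/
def Bset (n : ℕ) (π : Equiv.Perm (Fin n)) (k : ℕ) : Finset ℕ :=
  (Finset.univ.filter (fun j : Fin n => j.val < k)).image (fun j => (π j).val + 1)

lemma mem_Bset_iff {n : ℕ} (π : Equiv.Perm (Fin n)) (k : ℕ) (j : Fin n) :
    (π j).val + 1 ∈ Bset n π k ↔ j.val < k := by
  simp only [Bset, Finset.mem_image, Finset.mem_filter, Finset.mem_univ, true_and]
  constructor
  · rintro ⟨i, hi, he⟩
    have hij : i = j := π.injective (Fin.ext (by omega))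
    omega
  · exact fun h => ⟨j, h, rfl⟩

lemma Bset_bounds {n : ℕ} (π : Equiv.Perm (Fin n)) (k : ℕ) {x : ℕ}
    (hx : x ∈ Bset n π k) : 1 ≤ x ∧ x ≤ n := by
  simp only [Bset, Finset.mem_image, Finset.mem_filter, Finset.mem_univ, true_and] at hx
  obtain ⟨i, _, he⟩ := hx
  have := (π i).isLt
  omega

lemma Bset_sup_mem {n : ℕ} (π : Equiv.Perm (Fin n)) (k : ℕ)
    (hne : (Bset n π k).Nonempty) : (Bset n π k).sup id ∈ Bset n π k := by
  have h : (Bset n π k).sup id = (Bset n π k).max' hne := by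
    rw [Finset.max'_eq_sup', Finset.sup'_eq_sup]
  rw [h]
  exact Finset.max'_mem _ _

lemma Bset_mem_exists {n : ℕ} (π : Equiv.Perm (Fin n)) (k : ℕ) {x : ℕ}
    (hx : x ∈ Bset n π k) : ∃ j : Fin n, j.val < k ∧ (π j).val + 1 = x := by
  simp only [Bset, Finset.mem_image, Finset.mem_filter, Finset.mem_univ, true_and] at hx
  exact hx

lemma carrelEnd_spec (n : ℕ) (R : Finset ℕ) (i : Fin n) :
    (i.val + 1 ≤ carrelEnd n R i ∧ carrelEnd n R i ∈ insert n R) ∧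
      ∀ x ∈ insert n R, i.val + 1 ≤ x → carrelEnd n R i ≤ x := by
  constructor
  · have := Finset.min'_mem ((insert n R).filter (fun q => i.val + 1 ≤ q))
      ⟨n, Finset.mem_filter.mpr ⟨Finset.mem_insert_self n R, i.isLt⟩⟩
    rw [Finset.mem_filter] at this
    exact ⟨this.2, this.1⟩
  · intro x hx hx2
    exact Finset.min'_le _ _ (Finset.mem_filter.mpr ⟨hx, hx2⟩)

/-- An R-permutation π is R-312-avoiding iff its associated R-chain is R-rightmost clump
deleting: for each q_h ∈ R, with b_{h+1} = min(B_{h+1} \ B_h) and m_h = max(B_h), the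
interval [b_{h+1}, m_h] is contained in B_{h+1}.  (Here B_{h+1} = Bset at the next carrel
end, which is carrelEnd at 1-based position q_h + 1.) -/
theorem stmt8 (n : ℕ) (R : Finset ℕ) (hR : R ⊆ Finset.Ico 1 n)
    (π : Equiv.Perm (Fin n)) (hπ : IsRPerm n R π) :
    RAvoids312 n R π ↔
      ∀ q (hq : q ∈ R),
        Finset.Icc
          (sInf ((Bset n π (carrelEnd n R ⟨q, (Finset.mem_Ico.mp (hR hq)).2⟩) \ Bset n π q :
            Finset ℕ) : Set ℕ))
          ((Bset n π q).sup id)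
        ⊆ Bset n π (carrelEnd n R ⟨q, (Finset.mem_Ico.mp (hR hq)).2⟩) := by
  constructor
  · -- avoiding ⇒ clump deleting
    intro hav q hq
    have hq' := Finset.mem_Ico.mp (hR hq)
    set Q := carrelEnd n R ⟨q, (Finset.mem_Ico.mp (hR hq)).2⟩ with hQdef
    obtain ⟨⟨hQge, hQmem⟩, hQle⟩ := carrelEnd_spec n R ⟨q, (Finset.mem_Ico.mp (hR hq)).2⟩
    have hQge' : q + 1 ≤ Q := hQge
    intro v hv
    by_contra hvB'
    rw [Finset.mem_Icc] at hv
    -- B' \ B is nonempty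
    have hne : ((Bset n π Q \ Bset n π q : Finset ℕ) : Set ℕ).Nonempty := by
      refine ⟨(π ⟨q, hq'.2⟩).val + 1, Finset.mem_coe.mpr (Finset.mem_sdiff.mpr ⟨?_, ?_⟩)⟩
      · exact (mem_Bset_iff π Q ⟨q, hq'.2⟩).mpr (show q < Q by omega)
      · exact fun h => lt_irrefl q ((mem_Bset_iff π q ⟨q, hq'.2⟩).mp h)
    have hbmem : sInf ((Bset n π Q \ Bset n π q : Finset ℕ) : Set ℕ) ∈
        Bset n π Q \ Bset n π q := Finset.mem_coe.mp (Nat.sInf_mem hne)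
    rw [Finset.mem_sdiff] at hbmem
    obtain ⟨hbB', hbB⟩ := hbmem
    obtain ⟨β, hβQ, hβv⟩ := Bset_mem_exists π Q hbB'
    have hβq : q ≤ β.val := by
      by_contra hlt
      exact hbB (hβv ▸ (mem_Bset_iff π q β).mpr (by omega))
    -- max B is π a for some a with a < q
    have hBne : (Bset n π q).Nonempty := by
      have h0 : 0 < n := by omega
      exact ⟨(π ⟨0, h0⟩).val + 1, (mem_Bset_iff π q ⟨0, h0⟩).mpr (show (0:ℕ) < q by omega)⟩
    have hmmem := Bset_sup_mem π q hBne
    obtain ⟨a, haq, hav'⟩ := Bset_mem_exists π q hmmem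
    have hBsub : Bset n π q ⊆ Bset n π Q := by
      intro x hx
      obtain ⟨j, hj, he⟩ := Bset_mem_exists π q hx
      exact he ▸ (mem_Bset_iff π Q j).mpr (by omega)
    have hvb : sInf ((Bset n π Q \ Bset n π q : Finset ℕ) : Set ℕ) < v := by
      rcases lt_or_eq_of_le hv.1 with h | h
      · exact h
      · exact absurd (h ▸ hbB') hvB'
    have hvm : v < (Bset n π q).sup id := by
      rcases lt_or_eq_of_le hv.2 with h | h
      · exact h
      · exact absurd (hBsub (h ▸ hmmem)) hvB'
    have hv1 : 1 ≤ v := by omega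
    have hvn : v ≤ n := by
      have := (Bset_bounds π q hmmem).2
      omega
    have hvn' : v - 1 < n := by omega
    have hcv : (π (π.symm ⟨v - 1, hvn'⟩)).val + 1 = v := by
      rw [Equiv.apply_symm_apply]
      show v - 1 + 1 = v
      omega
    set c : Fin n := π.symm ⟨v - 1, hvn'⟩ with hcdef
    have hcQ : Q ≤ c.val := by
      by_contra hlt
      exact hvB' (hcv ▸ (mem_Bset_iff π Q c).mpr (by omega))
    have hQn : Q < n := by have := c.isLt; omega
    have hQR : Q ∈ R := by
      rcases Finset.mem_insert.mp hQmem with h | h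
      · omega
      · exact h
    refine hav ⟨a, β, c, ?_, ?_, ⟨q, hq, by omega⟩, ⟨Q, hQR, by omega⟩, ?_, ?_, ?_⟩
    · exact Fin.lt_def.mpr (by omega)
    · exact Fin.lt_def.mpr (by omega)
    · exact Fin.lt_def.mpr (by omega)
    · exact Fin.lt_def.mpr (by omega)
    · exact Fin.lt_def.mpr (by omega)
  · -- clump deleting ⇒ avoiding
    intro hcl
    rintro ⟨a, b, c, hab, hbc, ⟨q1, hq1R, hq1a, hq1b⟩, ⟨q2, hq2R, hq2b, hq2c⟩,
      hba, hbc2, hca⟩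
    rw [Fin.lt_def] at hab hbc hba hbc2 hca
    -- q = largest element of R that is ≤ b
    obtain ⟨q, hqR, hqb, hqmax⟩ :
        ∃ q ∈ R, q ≤ b.val ∧ ∀ x ∈ R, x ≤ b.val → x ≤ q := by
      have hSne : (R.filter (fun y => y ≤ b.val)).Nonempty :=
        ⟨q1, Finset.mem_filter.mpr ⟨hq1R, hq1b⟩⟩
      have hm := Finset.max'_mem _ hSne
      rw [Finset.mem_filter] at hm
      refine ⟨(R.filter (fun y => y ≤ b.val)).max' hSne, hm.1, hm.2, ?_⟩
      intro x hx hxb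
      exact Finset.le_max' (R.filter (fun y => y ≤ b.val)) x
        (Finset.mem_filter.mpr ⟨hx, hxb⟩)
    have hq' := Finset.mem_Ico.mp (hR hqR)
    have hkey := hcl q hqR
    set Q := carrelEnd n R ⟨q, (Finset.mem_Ico.mp (hR hqR)).2⟩ with hQdef
    obtain ⟨⟨hQge, hQmem⟩, hQle⟩ := carrelEnd_spec n R ⟨q, (Finset.mem_Ico.mp (hR hqR)).2⟩
    have hQge' : q + 1 ≤ Q := hQge
    have hbQ : b.val < Q := by
      by_contra hle
      rcases Finset.mem_insert.mp hQmem with h | h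
      · have := b.isLt
        have : Q = n := h
        omega
      · have := hqmax Q h (by omega)
        omega
    have hQq2 : Q ≤ q2 := hQle q2 (Finset.mem_insert_of_mem hq2R) (show q + 1 ≤ q2 by omega)
    have haq : a.val < q := by
      have := hqmax q1 hq1R hq1b
      omega
    have hbB' : (π b).val + 1 ∈ Bset n π Q \ Bset n π q := by
      rw [Finset.mem_sdiff, mem_Bset_iff, mem_Bset_iff]
      omega
    have hlow : sInf ((Bset n π Q \ Bset n π q : Finset ℕ) : Set ℕ) ≤ (π c).val + 1 := by
      have h1 := Nat.sInf_le (Finset.mem_coe.mpr hbB')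
      omega
    have haB : (π a).val + 1 ∈ Bset n π q := (mem_Bset_iff π q a).mpr haq
    have hhigh : (π c).val + 1 ≤ (Bset n π q).sup id := by
      have := Finset.le_sup (f := id) haB
      simp only [id] at this
      omega
    have hcB' : (π c).val + 1 ∈ Bset n π Q :=
      hkey (Finset.mem_Icc.mpr ⟨hlow, hhigh⟩)
    rw [mem_Bset_iff] at hcB'
    omega
end

section
/- For an R-chain B, the condition that [b_{h+1}, m_h] ⊆ B_{h+1} for all h ∈ [r] (where b_{h+1} = min(B_{h+1}\B_h) and m_h = max(B_h)) is equivalent to the condition that for all h ∈ [r], the elements of B_{h+1}\B_h that are less than m_h are exactly the s largest elements of [m_h]\B_h, where s is their number. -/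
/-- For an R-chain ∅ = B_0 ⊂ B_1 ⊂ ... ⊂ B_{r+1} = [n] with |B_h| = q_h, the condition
that [b_{h+1}, m_h] ⊆ B_{h+1} for all h ∈ [r] (where b_{h+1} = min(B_{h+1}\B_h) and
m_h = max(B_h)) is equivalent to: for all h ∈ [r], the elements of B_{h+1}\B_h that are
less than m_h are exactly the s largest elements of [m_h]\B_h, where s is their number. -/
theorem stmt9 (n r : ℕ) (q : ℕ → ℕ) (B : ℕ → Finset ℕ)
    (hq0 : q 0 = 0) (hqtop : q (r + 1) = n)
    (hqmono : ∀ h, h ≤ r → q h < q (h + 1))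
    (hB0 : B 0 = ∅) (hBtop : B (r + 1) = Finset.Icc 1 n)
    (hsub : ∀ h, h ≤ r → B h ⊆ B (h + 1))
    (hcard : ∀ h, h ≤ r + 1 → (B h).card = q h) :
    (∀ h, 1 ≤ h → h ≤ r →
        Finset.Icc (sInf ((B (h + 1) \ B h : Finset ℕ) : Set ℕ)) ((B h).sup id)
          ⊆ B (h + 1)) ↔
    (∀ h, 1 ≤ h → h ≤ r →
        ((B (h + 1) \ B h).filter (fun x => x < (B h).sup id)) ⊆
            (Finset.Icc 1 ((B h).sup id) \ B h) ∧
          ∀ x ∈ Finset.Icc 1 ((B h).sup id) \ B h,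
            x ∉ (B (h + 1) \ B h).filter (fun x => x < (B h).sup id) →
            ∀ y ∈ (B (h + 1) \ B h).filter (fun x => x < (B h).sup id), x < y) := by
  -- chain monotonicity
  have hchain : ∀ a b : ℕ, a ≤ b → b ≤ r + 1 → B a ⊆ B b := by
    intro a b hab hb
    induction b with
    | zero =>
      have : a = 0 := by omega
      subst this; exact subset_rfl
    | succ k ih =>
      rcases Nat.lt_or_ge a (k + 1) with h' | h'
      · exact (ih (by omega) (by omega)).trans (hsub k (by omega))
      · have : a = k + 1 := by omega
        subst this; exact subset_rfl
  have key : ∀ h, 1 ≤ h → h ≤ r →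
      (∀ y ∈ B (h + 1), 1 ≤ y) ∧ (B h).sup id ∈ B h ∧
      (↑(B (h + 1) \ B h) : Set ℕ).Nonempty := by
    intro h h1 hr
    have hy : ∀ y ∈ B (h + 1), 1 ≤ y := by
      intro y hyB
      have := hchain (h + 1) (r + 1) (by omega) le_rfl hyB
      rw [hBtop, Finset.mem_Icc] at this
      exact this.1
    have hBhne : (B h).Nonempty := by
      rw [← Finset.card_pos, hcard h (by omega)]
      have := hqmono (h - 1) (by omega)
      have he : h - 1 + 1 = h := by omega
      rw [he] at this
      omega
    have hm : (B h).sup id ∈ B h := by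
      have := Finset.max'_mem (B h) hBhne
      have heq : (B h).max' hBhne = (B h).sup id := by
        rw [Finset.max'_eq_sup', Finset.sup'_eq_sup]
      rwa [heq] at this
    have hDne : (B (h + 1) \ B h).Nonempty := by
      rw [Finset.sdiff_nonempty]
      intro hss
      have h1c := hcard h (by omega)
      have h2c := hcard (h + 1) (by omega)
      have := Finset.card_le_card hss
      have := hqmono h hr
      omega
    exact ⟨hy, hm, by exact_mod_cast hDne⟩
  constructor
  · intro H h h1 hr
    obtain ⟨hy, hm, hDne⟩ := key h h1 hr
    set m := (B h).sup id with hmdef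
    set b := sInf (↑(B (h + 1) \ B h) : Set ℕ) with hbdef
    have hbmem : b ∈ B (h + 1) \ B h := by
      have := Nat.sInf_mem hDne
      exact_mod_cast this
    have hble : ∀ y ∈ B (h + 1) \ B h, b ≤ y := by
      intro y hyD
      exact Nat.sInf_le (by exact_mod_cast hyD)
    constructor
    · intro x hx
      rw [Finset.mem_filter, Finset.mem_sdiff] at hx
      rw [Finset.mem_sdiff, Finset.mem_Icc]
      exact ⟨⟨hy x hx.1.1, le_of_lt hx.2⟩, hx.1.2⟩
    · intro x hx hxF y hyF
      rw [Finset.mem_sdiff, Finset.mem_Icc] at hx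
      rw [Finset.mem_filter, Finset.mem_sdiff] at hyF
      by_contra hcon
      push_neg at hcon
      -- y ≤ x, derive x ∈ F, contradiction
      have hbley : b ≤ y := hble y (Finset.mem_sdiff.mpr hyF.1)
      have hxmem : x ∈ B (h + 1) := H h h1 hr (Finset.mem_Icc.mpr ⟨le_trans hbley hcon, hx.1.2⟩)
      have hxltm : x < m := by
        rcases lt_or_eq_of_le hx.1.2 with h' | h'
        · exact h'
        · exact absurd (h' ▸ hm) hx.2
      exact hxF (Finset.mem_filter.mpr ⟨Finset.mem_sdiff.mpr ⟨hxmem, hx.2⟩, hxltm⟩)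
  · intro H h h1 hr
    obtain ⟨hy, hm, hDne⟩ := key h h1 hr
    obtain ⟨-, H2⟩ := H h h1 hr
    set m := (B h).sup id with hmdef
    set b := sInf (↑(B (h + 1) \ B h) : Set ℕ) with hbdef
    have hbmem : b ∈ B (h + 1) \ B h := by
      have := Nat.sInf_mem hDne
      exact_mod_cast this
    rw [Finset.mem_sdiff] at hbmem
    have hb1 : 1 ≤ b := hy b hbmem.1
    intro z hz
    rw [Finset.mem_Icc] at hz
    by_contra hzB
    have hzBh : z ∉ B h := fun hc => hzB (hsub h hr hc)
    have hzltm : z < m := by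
      rcases lt_or_eq_of_le hz.2 with h' | h'
      · exact h'
      · exact absurd (h' ▸ hm) hzBh
    have hbltm : b < m := lt_of_le_of_lt hz.1 hzltm
    have hbF : b ∈ (B (h + 1) \ B h).filter (fun x => x < m) :=
      Finset.mem_filter.mpr ⟨Finset.mem_sdiff.mpr hbmem, hbltm⟩
    have hzIcc : z ∈ Finset.Icc 1 m \ B h :=
      Finset.mem_sdiff.mpr ⟨Finset.mem_Icc.mpr ⟨le_trans hb1 hz.1, hz.2⟩, hzBh⟩
    have hzF : z ∉ (B (h + 1) \ B h).filter (fun x => x < m) := by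
      intro hc
      exact hzB (Finset.mem_sdiff.mp (Finset.mem_filter.mp hc).1).1
    have := H2 z hzIcc hzF b hbF
    omega
end

section
/- For any upper R-tuple υ, its R-core Δ_R(υ) satisfies Δ_R(υ) ≤ υ entrywise, Δ_R(υ) is an R-increasing upper tuple, and Δ_R(υ) has the same R-critical list as υ; moreover if υ is already R-increasing then Δ_R(υ) = υ. -/
lemma sc_refl {n : ℕ} (R : Finset ℕ) (i : Fin n) : SameCarrel R i i :=
  fun _ _ h => by omega

lemma sc_mono {n : ℕ} {R : Finset ℕ} {i j a b : Fin n} (h : SameCarrel R i j)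
    (ha : i.val ≤ a.val) (hb : b.val ≤ j.val) : SameCarrel R a b :=
  fun q hq hc => h q hq ⟨by omega, by omega⟩

lemma sc_trans {n : ℕ} {R : Finset ℕ} {i j k : Fin n} (hij : SameCarrel R i j)
    (hjk : SameCarrel R j k) : SameCarrel R i k := by
  intro q hq hc
  by_cases hcq : q ≤ j.val
  · exact hij q hq ⟨hc.1, hcq⟩
  · exact hjk q hq ⟨by omega, hc.2⟩

open Classical in
lemma core_spec {n : ℕ} (R : Finset ℕ) (ν : Fin n → ℕ) (i : Fin n) :
    ∃ x : Fin n, i ≤ x ∧ SameCarrel R i x ∧ IsCritical n R ν x ∧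
      coreMap n R ν i = ν x - (x.val - i.val) ∧
      (∀ y : Fin n, i ≤ y → SameCarrel R i y → IsCritical n R ν y → x ≤ y) ∧
      (∀ y : Fin n, i ≤ y → SameCarrel R i y → ν x + y.val ≤ ν y + x.val) := by
  set s : Finset (Fin n) :=
    Finset.univ.filter (fun x => i ≤ x ∧ SameCarrel R i x ∧ IsCritical n R ν x) with hs
  have hne : s.Nonempty := by
    set T := Finset.univ.filter (fun x : Fin n => i ≤ x ∧ SameCarrel R i x) with hT
    have hTne : T.Nonempty := ⟨i, by simp [hT, sc_refl]⟩
    refine ⟨T.max' hTne, ?_⟩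
    have hmem := T.max'_mem hTne
    simp only [hT, Finset.mem_filter] at hmem
    simp only [hs, Finset.mem_filter]
    refine ⟨Finset.mem_univ _, hmem.2.1, hmem.2.2, ?_⟩
    intro j hj hsc
    exfalso
    have hjT : j ∈ T := by
      simp only [hT, Finset.mem_filter]
      exact ⟨Finset.mem_univ _, le_trans hmem.2.1 (le_of_lt hj),
        sc_trans hmem.2.2 hsc⟩
    exact absurd (T.le_max' j hjT) (not_le.mpr hj)
  set x := s.min' hne with hxdef
  obtain ⟨-, hix, hscx, hcx⟩ := Finset.mem_filter.mp (s.min'_mem hne)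
  rw [← hxdef] at hix hscx hcx
  have hmin : ∀ y : Fin n, i ≤ y → SameCarrel R i y → IsCritical n R ν y → x ≤ y := by
    intro y h1 h2 h3
    exact s.min'_le y (by simp only [hs, Finset.mem_filter]; exact ⟨Finset.mem_univ _, h1, h2, h3⟩)
  refine ⟨x, hix, hscx, hcx, ?_, hmin, ?_⟩
  · show coreMap n R ν i = _
    simp only [coreMap]
    rw [dif_pos hne]
  · intro y hy hscy
    by_contra hcon
    push_neg at hcon
    set B := Finset.univ.filter
      (fun z : Fin n => i ≤ z ∧ SameCarrel R i z ∧ ν z + x.val < ν x + z.val) with hB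
    have hBne : B.Nonempty := ⟨y, by
      simp only [hB, Finset.mem_filter]
      exact ⟨Finset.mem_univ _, hy, hscy, by omega⟩⟩
    set z := B.max' hBne with hz
    obtain ⟨-, hiz, hscz, hfz⟩ := Finset.mem_filter.mp (B.max'_mem hBne)
    rw [← hz] at hiz hscz hfz
    have hzx : z < x := by
      rcases lt_trichotomy z x with h | h | h
      · exact h
      · exact absurd hfz (by rw [h]; omega)
      · have : SameCarrel R x z := sc_mono hscz hix (le_refl _)
        have := hcx z h this
        omega
    have hcz : IsCritical n R ν z := by
      intro j hj hsczj
      have hij : i ≤ j := le_trans hiz (le_of_lt hj)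
      have hscij : SameCarrel R i j := sc_trans hscz hsczj
      by_cases hfj : ν j + x.val < ν x + j.val
      · exfalso
        have : j ∈ B := by
          simp only [hB, Finset.mem_filter]
          exact ⟨Finset.mem_univ _, hij, hscij, hfj⟩
        exact absurd (B.le_max' j this) (not_le.mpr hj)
      · omega
    exact absurd (hmin z hiz hscz hcz) (not_le.mpr hzx)

/-- For any upper R-tuple υ, its R-core Δ_R(υ) satisfies Δ_R(υ) ≤ υ entrywise, Δ_R(υ) is
an R-increasing upper tuple, Δ_R(υ) has the same R-critical list as υ, and if υ is
already R-increasing then Δ_R(υ) = υ. -/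
theorem stmt10 (n : ℕ) (R : Finset ℕ) (hR : R ⊆ Finset.Ico 1 n)
    (υ : Fin n → ℕ) (hu : IsUpperTuple n υ) :
    (∀ i, coreMap n R υ i ≤ υ i) ∧
    IsRIncrUpper n R (coreMap n R υ) ∧
    critList n R (coreMap n R υ) = critList n R υ ∧
    (IsRIncr n R υ → coreMap n R υ = υ) := by
  have key : ∀ i, coreMap n R υ i ≤ υ i ∧ i.val + 1 ≤ coreMap n R υ i := by
    intro i
    obtain ⟨x, hix, hsc, hcrit, heq, hmin, hA⟩ := core_spec R υ i
    have h1 := hA i (le_refl i) (sc_refl R i)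
    have h2 := (hu x).1
    have h3 : i.val ≤ x.val := Fin.le_def.mp hix
    constructor <;> (rw [heq]; omega)
  have hstep1 : ∀ a : Fin n, IsCritical n R υ a → coreMap n R υ a = υ a := by
    intro a ha
    obtain ⟨x, hax, hsc, hcrit, heq, hmin, hA⟩ := core_spec R υ a
    have hxa : x = a := le_antisymm (hmin a (le_refl a) (sc_refl R a) ha) hax
    rw [heq, hxa]
    omega
  refine ⟨fun i => (key i).1, ⟨fun i => ⟨(key i).2, le_trans (key i).1 (hu i).2⟩, ?_⟩, ?_, ?_⟩
  · -- R-increasing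
    intro i j hj hqR
    have hscij : SameCarrel R i j := by
      intro q hq hc
      have : q = i.val + 1 := by omega
      exact hqR (this ▸ hq)
    obtain ⟨x, hix, hsc, hcrit, heq, hmin, hA⟩ := core_spec R υ i
    obtain ⟨x', hjx', hsc', hcrit', heq', hmin', hA'⟩ := core_spec R υ j
    have hix' : SameCarrel R i x' := sc_trans hscij hsc'
    have hiju : i.val < j.val := by omega
    have hjx'v : j.val ≤ x'.val := Fin.le_def.mp hjx'
    have hixv : i.val ≤ x.val := Fin.le_def.mp hix
    have hilex' : i ≤ x' := Fin.le_def.mpr (by omega)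
    rw [heq, heq']
    by_cases hcase : j.val ≤ x.val
    · have hxx' : x = x' := by
        have h1 : x ≤ x' := hmin x' hilex' hix' hcrit'
        have h2 : x' ≤ x := hmin' x (Fin.le_def.mpr hcase)
          (sc_mono hsc (le_of_lt hiju) (le_refl _)) hcrit
        exact le_antisymm h1 h2
      rw [hxx']
      have := (hu x').1
      omega
    · have hxi : x = i := Fin.ext (by omega)
      rw [hxi] at hcrit
      have hc := hcrit x' (Fin.lt_def.mpr (by omega)) hix'
      rw [hxi]
      have := (hu x').1
      omega
  · -- critList equality
    have hcrit_iff : ∀ a : Fin n, IsCritical n R (coreMap n R υ) a ↔ IsCritical n R υ a := by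
      intro a
      constructor
      · intro hd
        by_contra hν
        obtain ⟨x, hax, hsc, hcrit, heq, hmin, hA⟩ := core_spec R υ a
        have hxa : a < x := by
          rcases eq_or_lt_of_le hax with h | h
          · rw [← h] at hcrit; exact absurd hcrit hν
          · exact h
        have hdx := hd x hxa hsc
        have hδx : coreMap n R υ x = υ x := hstep1 x hcrit
        have := (hu x).1
        have h1 : a.val ≤ x.val := Fin.le_def.mp hax
        rw [heq, hδx] at hdx
        omega
      · intro hν j haj hscaj
        obtain ⟨x', hjx', hsc', hcrit', heq', hmin', hA'⟩ := core_spec R υ j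
        have hax' : SameCarrel R a x' := sc_trans hscaj hsc'
        have h1 : a.val < j.val := Fin.lt_def.mp haj
        have h2 : j.val ≤ x'.val := Fin.le_def.mp hjx'
        have hc := hν x' (Fin.lt_def.mpr (by omega)) hax'
        rw [hstep1 a hν, heq']
        have := (hu x').1
        omega
    ext ⟨a, m⟩
    simp only [critList, Set.mem_setOf_eq]
    constructor
    · rintro ⟨h1, h2⟩
      have hν := (hcrit_iff a).mp h1
      exact ⟨hν, by rw [h2, hstep1 a hν]⟩
    · rintro ⟨h1, h2⟩
      exact ⟨(hcrit_iff a).mpr h1, by rw [h2, hstep1 a h1]⟩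
  · -- already increasing
    intro hinc
    have chain : ∀ k : ℕ, ∀ i y : Fin n, y.val = i.val + k → SameCarrel R i y →
        υ i + y.val ≤ υ y + i.val := by
      intro k
      induction k with
      | zero =>
        intro i y hy _
        have hyi : y = i := Fin.ext (by omega)
        rw [hyi]
      | succ k ih =>
        intro i y hy hsc
        have hmlt : i.val + 1 < n := by have := y.isLt; omega
        let m : Fin n := ⟨i.val + 1, hmlt⟩
        have hmv : m.val = i.val + 1 := rfl
        have hnR : (i.val + 1) ∉ R := fun hq => hsc _ hq ⟨le_refl _, by omega⟩
        have h1 : υ i < υ m := hinc i m rfl hnR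
        have h2 : υ m + y.val ≤ υ y + m.val :=
          ih m y (by omega) (sc_mono hsc (by omega) (le_refl _))
        omega
    funext i
    obtain ⟨x, hix, hsc, hcrit, heq, hmin, hA⟩ := core_spec R υ i
    have h1 := hA i (le_refl i) (sc_refl R i)
    have hixv : i.val ≤ x.val := Fin.le_def.mp hix
    have h2 := chain (x.val - i.val) i x (by omega) hsc
    have := (hu x).1
    rw [heq]
    omega
end

section
/- Two upper R-tuples υ and υ′ satisfy Δ_R(υ) = Δ_R(υ′) if and only if υ and υ′ have the same R-critical list. -/
section AuxStmt11

variable {n : ℕ} {R : Finset ℕ}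

lemma aux_ce_mem (i : Fin n) :
    carrelEnd n R i ∈ (insert n R).filter (fun q => i.val + 1 ≤ q) :=
  Finset.min'_mem _ _

lemma aux_ce_gt (i : Fin n) : i.val < carrelEnd n R i := by
  have h := aux_ce_mem (R := R) i
  rw [Finset.mem_filter] at h
  omega

lemma aux_ce_le_n (i : Fin n) : carrelEnd n R i ≤ n :=
  Finset.min'_le _ _ (Finset.mem_filter.mpr ⟨Finset.mem_insert_self n R, i.isLt⟩)

lemma aux_ce_le {q : ℕ} (i : Fin n) (hq : q ∈ R) (h : i.val + 1 ≤ q) :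
    carrelEnd n R i ≤ q :=
  Finset.min'_le _ _ (Finset.mem_filter.mpr ⟨Finset.mem_insert_of_mem hq, h⟩)

lemma aux_sc_iff (i j : Fin n) : SameCarrel R i j ↔ j.val < carrelEnd n R i := by
  constructor
  · intro h
    by_contra hle
    push_neg at hle
    have hmem := aux_ce_mem (R := R) i
    rw [Finset.mem_filter, Finset.mem_insert] at hmem
    rcases hmem.1 with h1 | h1
    · have := j.isLt; omega
    · exact h _ h1 ⟨hmem.2, by omega⟩
  · intro h q hq hq2
    have := aux_ce_le i hq hq2.1
    omega

lemma aux_ce_congr (i j : Fin n) (h1 : i.val ≤ j.val) (h2 : j.val < carrelEnd n R i) :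
    carrelEnd n R j = carrelEnd n R i := by
  apply le_antisymm
  · apply Finset.min'_le
    rw [Finset.mem_filter]
    have hmem := aux_ce_mem (R := R) i
    rw [Finset.mem_filter] at hmem
    exact ⟨hmem.1, h2⟩
  · apply Finset.min'_le
    rw [Finset.mem_filter]
    have hmem := aux_ce_mem (R := R) j
    rw [Finset.mem_filter] at hmem
    exact ⟨hmem.1, by omega⟩

lemma aux_crit_last (ν : Fin n → ℕ) (i : Fin n) (h : i.val + 1 = carrelEnd n R i) :
    IsCritical n R ν i := by
  intro j hij hsc
  rw [aux_sc_iff] at hsc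
  rw [Fin.lt_def] at hij
  omega

end AuxStmt11

open Classical in
noncomputable def critSet (n : ℕ) (R : Finset ℕ) (ν : Fin n → ℕ) (i : Fin n) : Finset (Fin n) :=
  Finset.univ.filter (fun x => i ≤ x ∧ SameCarrel R i x ∧ IsCritical n R ν x)

section AuxStmt11b

variable {n : ℕ} {R : Finset ℕ} {ν : Fin n → ℕ}

lemma coreMap_def (i : Fin n) :
    coreMap n R ν i =
      if h : (critSet n R ν i).Nonempty then
        ν ((critSet n R ν i).min' h) - (((critSet n R ν i).min' h).val - i.val)
      else 0 := rfl

lemma mem_critSet {x i : Fin n} :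
    x ∈ critSet n R ν i ↔ i ≤ x ∧ SameCarrel R i x ∧ IsCritical n R ν x := by
  classical
  simp [critSet]

lemma critSet_nonempty (ν : Fin n → ℕ) (i : Fin n) : (critSet n R ν i).Nonempty := by
  have h1 := aux_ce_gt (R := R) i
  have h2 := aux_ce_le_n (R := R) i
  refine ⟨⟨carrelEnd n R i - 1, by omega⟩, ?_⟩
  rw [mem_critSet]
  have hcc : carrelEnd n R (⟨carrelEnd n R i - 1, by omega⟩ : Fin n) = carrelEnd n R i :=
    aux_ce_congr i _ (by simp; omega) (by simp; omega)
  refine ⟨?_, ?_, ?_⟩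
  · rw [Fin.le_def]; simp; omega
  · rw [aux_sc_iff]; simp; omega
  · exact aux_crit_last ν _ (by rw [hcc]; simp; omega)

noncomputable def minCrit (n : ℕ) (R : Finset ℕ) (ν : Fin n → ℕ) (i : Fin n) : Fin n :=
  (critSet n R ν i).min' (critSet_nonempty ν i)

lemma minCrit_mem (i : Fin n) :
    i ≤ minCrit n R ν i ∧ SameCarrel R i (minCrit n R ν i) ∧
      IsCritical n R ν (minCrit n R ν i) :=
  mem_critSet.mp (Finset.min'_mem _ _)

lemma minCrit_min {i y : Fin n} (h1 : i ≤ y) (h2 : SameCarrel R i y)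
    (h3 : IsCritical n R ν y) : minCrit n R ν i ≤ y :=
  Finset.min'_le _ _ (mem_critSet.mpr ⟨h1, h2, h3⟩)

lemma coreMap_eq (i : Fin n) :
    coreMap n R ν i = ν (minCrit n R ν i) - ((minCrit n R ν i).val - i.val) := by
  rw [coreMap_def, dif_pos (critSet_nonempty ν i)]
  rfl

lemma coreMap_add (hu : IsUpperTuple n ν) (i : Fin n) :
    coreMap n R ν i + (minCrit n R ν i).val = ν (minCrit n R ν i) + i.val := by
  have hx := (hu (minCrit n R ν i)).1
  have hix := (minCrit_mem (R := R) (ν := ν) i).1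
  rw [Fin.le_def] at hix
  rw [coreMap_eq]
  omega

lemma coreMap_crit {i : Fin n} (hc : IsCritical n R ν i) : coreMap n R ν i = ν i := by
  have hself : SameCarrel R i i := (aux_sc_iff i i).mpr (aux_ce_gt i)
  have h1 : minCrit n R ν i ≤ i := minCrit_min le_rfl hself hc
  have h2 := (minCrit_mem (R := R) (ν := ν) i).1
  have hxe : minCrit n R ν i = i := le_antisymm h1 h2
  rw [coreMap_eq, hxe, Nat.sub_self, Nat.sub_zero]

lemma not_last_of_not_crit {i : Fin n} (hnc : ¬ IsCritical n R ν i) :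
    i.val + 1 < carrelEnd n R i := by
  have h1 := aux_ce_gt (R := R) i
  rcases Nat.lt_or_ge (i.val + 1) (carrelEnd n R i) with h | h
  · exact h
  · exact absurd (aux_crit_last ν i (by omega)) hnc

lemma critSet_succ {i : Fin n} (hnc : ¬ IsCritical n R ν i) (hn : i.val + 1 < n)
    (hce : i.val + 1 < carrelEnd n R i) :
    critSet n R ν (⟨i.val + 1, hn⟩ : Fin n) = critSet n R ν i := by
  have hceq : carrelEnd n R (⟨i.val + 1, hn⟩ : Fin n) = carrelEnd n R i :=
    aux_ce_congr i _ (by simp) (by simpa using hce)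
  ext x
  simp only [mem_critSet]
  rw [Fin.le_def, Fin.le_def, aux_sc_iff, aux_sc_iff, hceq]
  constructor
  · rintro ⟨h1, h2, h3⟩
    exact ⟨by simp at h1 ⊢; omega, h2, h3⟩
  · rintro ⟨h1, h2, h3⟩
    refine ⟨?_, h2, h3⟩
    by_contra hcon
    push_neg at hcon
    have hx : x = i := Fin.ext (by simp at hcon ⊢; omega)
    · exact hnc (hx ▸ h3)

lemma minCrit_succ {i : Fin n} (hnc : ¬ IsCritical n R ν i) (hn : i.val + 1 < n)
    (hce : i.val + 1 < carrelEnd n R i) :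
    minCrit n R ν (⟨i.val + 1, hn⟩ : Fin n) = minCrit n R ν i := by
  have hset := critSet_succ hnc hn hce
  apply le_antisymm
  · apply Finset.min'_le
    rw [hset]
    exact Finset.min'_mem _ _
  · apply Finset.min'_le
    rw [← hset]
    exact Finset.min'_mem _ _

lemma step_not_crit (hu : IsUpperTuple n ν) {i : Fin n} (hnc : ¬ IsCritical n R ν i) :
    ∃ hn : i.val + 1 < n,
      coreMap n R ν (⟨i.val + 1, hn⟩ : Fin n) = coreMap n R ν i + 1 := by
  have hce := not_last_of_not_crit hnc
  have hn : i.val + 1 < n := lt_of_lt_of_le hce (aux_ce_le_n i)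
  refine ⟨hn, ?_⟩
  have hmc := minCrit_succ hnc hn hce
  have h1 := coreMap_add (R := R) hu i
  have h2 := coreMap_add (R := R) hu (⟨i.val + 1, hn⟩ : Fin n)
  rw [hmc] at h2
  simp only [] at h2
  omega

lemma step_crit (hu : IsUpperTuple n ν) {i : Fin n} (hc : IsCritical n R ν i)
    (hce : i.val + 1 < carrelEnd n R i) (hn : i.val + 1 < n) :
    coreMap n R ν i + 2 ≤ coreMap n R ν (⟨i.val + 1, hn⟩ : Fin n) := by
  obtain ⟨hy1, hy2, hy3⟩ := minCrit_mem (R := R) (ν := ν) (⟨i.val + 1, hn⟩ : Fin n)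
  have hceq : carrelEnd n R (⟨i.val + 1, hn⟩ : Fin n) = carrelEnd n R i :=
    aux_ce_congr i _ (by simp) (by simp; omega)
  rw [aux_sc_iff, hceq] at hy2
  have hsc : SameCarrel R i (minCrit n R ν (⟨i.val + 1, hn⟩ : Fin n)) :=
    (aux_sc_iff _ _).mpr hy2
  rw [Fin.le_def] at hy1
  have hlt : i < minCrit n R ν (⟨i.val + 1, hn⟩ : Fin n) := by
    rw [Fin.lt_def]
    simp at hy1
    omega
  have hkey := hc _ hlt hsc
  have h2 := coreMap_add (R := R) hu (⟨i.val + 1, hn⟩ : Fin n)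
  have h3 := coreMap_crit (R := R) hc
  have h4 : (⟨i.val + 1, hn⟩ : Fin n).val = i.val + 1 := rfl
  simp at hy1
  omega

lemma crit_iff (hu : IsUpperTuple n ν) (i : Fin n) :
    IsCritical n R ν i ↔
      (i.val + 1 = carrelEnd n R i ∨
        ∃ hn : i.val + 1 < n,
          coreMap n R ν (⟨i.val + 1, hn⟩ : Fin n) ≠ coreMap n R ν i + 1) := by
  constructor
  · intro hc
    have h1 := aux_ce_gt (R := R) i
    rcases Nat.lt_or_ge (i.val + 1) (carrelEnd n R i) with hce | hce
    · have hn : i.val + 1 < n := lt_of_lt_of_le hce (aux_ce_le_n i)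
      have := step_crit hu hc hce hn
      exact Or.inr ⟨hn, by omega⟩
    · exact Or.inl (by omega)
  · rintro (h | ⟨hn, hne⟩)
    · exact aux_crit_last ν i h
    · by_contra hnc
      obtain ⟨hn', heq⟩ := step_not_crit hu hnc
      exact hne heq

end AuxStmt11b

/-- Two upper R-tuples υ and υ′ satisfy Δ_R(υ) = Δ_R(υ′) if and only if υ and υ′ have
the same R-critical list. -/
theorem stmt11 (n : ℕ) (R : Finset ℕ) (hR : R ⊆ Finset.Ico 1 n)
    (υ υ' : Fin n → ℕ) (hu : IsUpperTuple n υ) (hu' : IsUpperTuple n υ') :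
    coreMap n R υ = coreMap n R υ' ↔ critList n R υ = critList n R υ' := by
  constructor
  · intro h
    have hcrit : ∀ i : Fin n, IsCritical n R υ i ↔ IsCritical n R υ' i := by
      intro i
      rw [crit_iff hu i, crit_iff hu' i, h]
    ext p
    obtain ⟨i, v⟩ := p
    simp only [critList, Set.mem_setOf_eq]
    constructor
    · rintro ⟨hc, hv⟩
      have hc' := (hcrit i).mp hc
      have h1 := coreMap_crit (R := R) hc
      have h2 := coreMap_crit (R := R) hc'
      have h3 := congrFun h i
      exact ⟨hc', by omega⟩
    · rintro ⟨hc', hv⟩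
      have hc := (hcrit i).mpr hc'
      have h1 := coreMap_crit (R := R) hc
      have h2 := coreMap_crit (R := R) hc'
      have h3 := congrFun h i
      exact ⟨hc, by omega⟩
  · intro h
    have hcrit : ∀ i : Fin n, IsCritical n R υ i ↔ IsCritical n R υ' i := by
      intro i
      constructor
      · intro hc
        have hm : (i, υ i) ∈ critList n R υ := ⟨hc, rfl⟩
        rw [h] at hm
        exact hm.1
      · intro hc
        have hm : (i, υ' i) ∈ critList n R υ' := ⟨hc, rfl⟩
        rw [← h] at hm
        exact hm.1
    have hval : ∀ i : Fin n, IsCritical n R υ i → υ i = υ' i := by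
      intro i hc
      have hm : (i, υ i) ∈ critList n R υ := ⟨hc, rfl⟩
      rw [h] at hm
      exact hm.2
    funext i
    have hset : critSet n R υ i = critSet n R υ' i := by
      ext x
      simp only [mem_critSet]
      constructor
      · rintro ⟨h1, h2, h3⟩
        exact ⟨h1, h2, (hcrit x).mp h3⟩
      · rintro ⟨h1, h2, h3⟩
        exact ⟨h1, h2, (hcrit x).mpr h3⟩
    have hmin : minCrit n R υ i = minCrit n R υ' i := by
      apply le_antisymm
      · apply Finset.min'_le
        rw [hset]
        exact Finset.min'_mem _ _
      · apply Finset.min'_le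
        rw [← hset]
        exact Finset.min'_mem _ _
    have hcx : IsCritical n R υ (minCrit n R υ i) := (minCrit_mem (R := R) (ν := υ) i).2.2
    rw [coreMap_eq, coreMap_eq, hmin, ← hval _ (hmin ▸ hcx)]
end

section
/- For any R-critical list C, there exists a unique R-increasing upper tuple whose R-critical list is C; hence forming the R-critical list is a bijection from R-increasing upper tuples to R-critical lists. -/
/-- An abstract R-critical list: a set of pairs (critical index, critical entry) such
that entries lie in [n] with x ≤ y_x, each index carries at most one entry, the last
index of each carrel is critical, and within a carrel the staircase condition
y_{x_{u-1}} − y_{x_u} > x_{u-1} − x_u holds (pairwise form). -/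
def IsRCriticalList (n : ℕ) (R : Finset ℕ) (C : Set (Fin n × ℕ)) : Prop :=
  (∀ p ∈ C, p.1.val + 1 ≤ p.2 ∧ p.2 ≤ n) ∧
  (∀ p ∈ C, ∀ p' ∈ C, p.1 = p'.1 → p.2 = p'.2) ∧
  (∀ i : Fin n, (i.val + 1 ∈ R ∨ i.val + 1 = n) → ∃ y, (i, y) ∈ C) ∧
  (∀ p ∈ C, ∀ p' ∈ C, p.1 < p'.1 → SameCarrel R p.1 p'.1 →
    p.2 + p'.1.val < p'.2 + p.1.val)

namespace S13

variable {n : ℕ} {R : Finset ℕ}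

lemma sc_sub {i j i' j' : Fin n} (h : SameCarrel R i j)
    (h1 : i.val ≤ i'.val) (h2 : j'.val ≤ j.val) : SameCarrel R i' j' := by
  intro q hq hcon
  exact h q hq ⟨by omega, by omega⟩

lemma sc_glue {i j k : Fin n} (h1 : SameCarrel R i j) (h2 : SameCarrel R j k) :
    SameCarrel R i k := by
  intro q hq hcon
  by_cases hq' : q ≤ j.val
  · exact h1 q hq ⟨hcon.1, hq'⟩
  · exact h2 q hq ⟨by omega, hcon.2⟩

lemma sc_refl (i : Fin n) : SameCarrel R i i := by
  intro q hq hcon; omega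

lemma carrelEnd_le (i : Fin n) : carrelEnd n R i ≤ n :=
  Finset.min'_le _ n (Finset.mem_filter.mpr ⟨Finset.mem_insert_self n R, i.isLt⟩)

lemma lt_carrelEnd (i : Fin n) : i.val < carrelEnd n R i :=
  (Finset.mem_filter.mp (Finset.min'_mem _ _)).2

lemma carrelEnd_mem (i : Fin n) : carrelEnd n R i ∈ insert n R :=
  (Finset.mem_filter.mp (Finset.min'_mem _ _)).1

lemma le_carrelEnd {i : Fin n} {q : ℕ} (hq : q ∈ R) (h : i.val + 1 ≤ q) :
    carrelEnd n R i ≤ q :=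
  Finset.min'_le _ q (Finset.mem_filter.mpr ⟨Finset.mem_insert_of_mem hq, h⟩)

open Classical in
noncomputable def candF (n : ℕ) (R : Finset ℕ) (C : Set (Fin n × ℕ)) (i : Fin n) :
    Finset (Fin n) :=
  Finset.univ.filter (fun x => i.val ≤ x.val ∧ SameCarrel R i x ∧ ∃ y, (x, y) ∈ C)

noncomputable def xF (n : ℕ) (R : Finset ℕ) (C : Set (Fin n × ℕ)) (i : Fin n) : Fin n :=
  if h : (candF n R C i).Nonempty then (candF n R C i).min' h else i

open Classical in
noncomputable def yF (n : ℕ) (R : Finset ℕ) (C : Set (Fin n × ℕ)) (i : Fin n) : ℕ :=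
  if h : ∃ y, (xF n R C i, y) ∈ C then h.choose else 0

noncomputable def alphaF (n : ℕ) (R : Finset ℕ) (C : Set (Fin n × ℕ)) (i : Fin n) : ℕ :=
  yF n R C i + i.val - (xF n R C i).val

variable {C : Set (Fin n × ℕ)} (hC : IsRCriticalList n R C)

open Classical

include hC

lemma cand_nonempty (i : Fin n) : (candF n R C i).Nonempty := by
  have h1 : i.val < carrelEnd n R i := lt_carrelEnd i
  have h2 : carrelEnd n R i ≤ n := carrelEnd_le i
  set e : Fin n := ⟨carrelEnd n R i - 1, by omega⟩ with he
  have heval : e.val + 1 = carrelEnd n R i := by simp [he]; omega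
  have hcm : e.val + 1 ∈ R ∨ e.val + 1 = n := by
    rw [heval]
    rcases Finset.mem_insert.mp (carrelEnd_mem (R := R) i) with h | h
    · exact Or.inr h
    · exact Or.inl h
  obtain ⟨y, hy⟩ := hC.2.2.1 e hcm
  refine ⟨e, Finset.mem_filter.mpr ⟨Finset.mem_univ _, ?_, ?_, y, hy⟩⟩
  · simp [he]; omega
  · intro q hq hcon
    have := le_carrelEnd (i := i) hq hcon.1
    omega

lemma x_spec (i : Fin n) :
    i.val ≤ (xF n R C i).val ∧ SameCarrel R i (xF n R C i) ∧
      (xF n R C i, yF n R C i) ∈ C := by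
  have hne := cand_nonempty hC i
  have hx : xF n R C i = (candF n R C i).min' hne := dif_pos hne
  have hmem := Finset.min'_mem (candF n R C i) hne
  rw [← hx] at hmem
  obtain ⟨-, h1, h2, hy⟩ := Finset.mem_filter.mp hmem
  have hyF : yF n R C i = hy.choose := dif_pos hy
  exact ⟨h1, h2, by rw [hyF]; exact hy.choose_spec⟩

lemma x_min (i : Fin n) {x : Fin n} (hx : i.val ≤ x.val) (hsc : SameCarrel R i x)
    (hy : ∃ y, (x, y) ∈ C) : (xF n R C i).val ≤ x.val := by
  have hne := cand_nonempty hC i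
  have hxe : xF n R C i = (candF n R C i).min' hne := dif_pos hne
  rw [hxe]
  exact Finset.min'_le _ x (Finset.mem_filter.mpr ⟨Finset.mem_univ _, hx, hsc, hy⟩)

lemma x_eq_self {i : Fin n} {y : ℕ} (h : (i, y) ∈ C) :
    xF n R C i = i ∧ yF n R C i = y := by
  have h1 := x_min hC i (le_refl _) (sc_refl i) ⟨y, h⟩
  have h2 := x_spec hC i
  have hxi : xF n R C i = i := Fin.ext (by omega)
  refine ⟨hxi, ?_⟩
  have := h2.2.2
  rw [hxi] at this
  exact hC.2.1 _ this _ h rfl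

lemma key_eq (i : Fin n) :
    alphaF n R C i + (xF n R C i).val = yF n R C i + i.val := by
  have h1 : (xF n R C i).val + 1 ≤ yF n R C i := (hC.1 _ (x_spec hC i).2.2).1
  have h2 := (x_spec hC i).1
  simp only [alphaF]
  omega

end S13

open S13 in
lemma S13.incr_of_sameCarrel {n : ℕ} {R : Finset ℕ} {β : Fin n → ℕ}
    (hβ : IsRIncr n R β) :
    ∀ d : ℕ, ∀ i j : Fin n, j.val = i.val + d → SameCarrel R i j → β i + d ≤ β j := by
  intro d
  induction d with
  | zero =>
    intro i j hj _
    have : j = i := Fin.ext (by omega)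
    simp [this]
  | succ d ih =>
    intro i j hj hsc
    have hlt : i.val + d < n := by omega
    set j' : Fin n := ⟨i.val + d, hlt⟩ with hj'
    have h1 := ih i j' rfl (sc_sub hsc (le_refl _) (by simp [hj']; omega))
    have hnotR : j'.val + 1 ∉ R := by
      intro hmem
      exact hsc _ hmem ⟨by simp [hj'], by simp [hj']; omega⟩
    have h2 := hβ j' j (by simp [hj']; omega) hnotR
    omega

/-- For any R-critical list C, there is a unique R-increasing upper tuple whose
R-critical list is C; hence forming the R-critical list is a bijection from
R-increasing upper tuples to R-critical lists. -/
theorem stmt13 (n : ℕ) (R : Finset ℕ) (hR : R ⊆ Finset.Ico 1 n) :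
    (∀ α : Fin n → ℕ, IsRIncrUpper n R α → IsRCriticalList n R (critList n R α)) ∧
    (∀ C : Set (Fin n × ℕ), IsRCriticalList n R C →
      ∃! α : Fin n → ℕ, IsRIncrUpper n R α ∧ critList n R α = C) := by
  constructor
  · -- Part 1
    intro α hα
    refine ⟨?_, ?_, ?_, ?_⟩
    · rintro ⟨i, y⟩ ⟨hcrit, hy⟩
      have := hα.1 i
      simp only at hy ⊢
      omega
    · rintro ⟨i, y⟩ ⟨-, hy⟩ ⟨i', y'⟩ ⟨-, hy'⟩ h
      simp only at *
      subst h; omega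
    · intro i hi
      refine ⟨α i, ?_, rfl⟩
      intro j hij hsc
      exfalso
      rcases hi with hi | hi
      · exact hsc _ hi ⟨le_refl _, by exact hij⟩
      · have := j.isLt
        have : i.val < j.val := hij
        omega
    · rintro ⟨i, y⟩ ⟨hcrit, hy⟩ ⟨i', y'⟩ ⟨-, hy'⟩ hlt hsc
      simp only at *
      have := hcrit i' hlt hsc
      omega
  · -- Part 2
    intro C hC
    refine ⟨S13.alphaF n R C, ⟨⟨?_, ?_⟩, ?_⟩, ?_⟩
    · -- upper tuple
      intro i
      have hk := S13.key_eq hC i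
      have hs := S13.x_spec hC i
      have hb := hC.1 _ hs.2.2
      simp only at hb
      omega
    · -- R-increasing
      intro i j hj hnotR
      have hki := S13.key_eq hC i
      have hkj := S13.key_eq hC j
      have hsi := S13.x_spec hC i
      have hsj := S13.x_spec hC j
      by_cases hxi : (S13.xF n R C i).val = i.val
      · -- case A: i itself is critical
        have hxieq : S13.xF n R C i = i := Fin.ext hxi
        have hiC : (i, S13.yF n R C i) ∈ C := by
          have h := hsi.2.2; rw [hxieq] at h; exact h
        have hsc : SameCarrel R i (S13.xF n R C j) := by
          intro q hq hcon
          by_cases hq1 : q = i.val + 1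
          · exact hnotR (hq1 ▸ hq)
          · exact hsj.2.1 q hq ⟨by omega, hcon.2⟩
        have hlt : i < S13.xF n R C j := by
          rw [Fin.lt_def]; omega
        have hst := hC.2.2.2 _ hiC _ hsj.2.2 hlt hsc
        simp only at hst
        omega
      · -- case B: xF i > i, show xF j = xF i
        have hxi' : i.val < (S13.xF n R C i).val := by
          have := hsi.1; omega
        have h1 : (S13.xF n R C j).val ≤ (S13.xF n R C i).val :=
          S13.x_min hC j (by omega) (S13.sc_sub hsi.2.1 (by omega) (le_refl _))
            ⟨_, hsi.2.2⟩
        have hscij : SameCarrel R i (S13.xF n R C j) := by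
          intro q hq hcon
          by_cases hq1 : q = i.val + 1
          · exact hnotR (hq1 ▸ hq)
          · exact hsj.2.1 q hq ⟨by omega, hcon.2⟩
        have h2 : (S13.xF n R C i).val ≤ (S13.xF n R C j).val :=
          S13.x_min hC i (by have := hsj.1; omega) hscij ⟨_, hsj.2.2⟩
        have hxeq : S13.xF n R C i = S13.xF n R C j := Fin.ext (by omega)
        have hyeq : S13.yF n R C i = S13.yF n R C j := by
          apply hC.2.1 _ hsi.2.2 _ hsj.2.2
          exact hxeq
        omega
    · -- critList = C
      ext ⟨i, y⟩
      simp only [critList, Set.mem_setOf_eq]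
      constructor
      · rintro ⟨hcrit, hy⟩
        -- show xF i = i
        have hsi := S13.x_spec hC i
        have hki := S13.key_eq hC i
        have hxi : S13.xF n R C i = i := by
          by_contra hne
          have hxi' : i.val < (S13.xF n R C i).val := by
            rcases lt_or_eq_of_le hsi.1 with h | h
            · exact h
            · exact absurd (Fin.ext h.symm) hne
          have hxx := S13.x_eq_self hC hsi.2.2
          have hkx := S13.key_eq hC (S13.xF n R C i)
          rw [hxx.1, hxx.2] at hkx
          have := hcrit (S13.xF n R C i) (Fin.lt_def.mpr hxi') hsi.2.1
          omega
        have : S13.alphaF n R C i = S13.yF n R C i := by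
          rw [hxi] at hki; omega
        rw [hy, this]
        rw [hxi] at hsi
        exact hsi.2.2
      · intro hmem
        have hxx := S13.x_eq_self hC hmem
        have hki := S13.key_eq hC i
        rw [hxx.1, hxx.2] at hki
        have hαi : S13.alphaF n R C i = y := by omega
        refine ⟨?_, hαi.symm⟩
        intro j hij hsc
        have hsj := S13.x_spec hC j
        have hkj := S13.key_eq hC j
        have hscix : SameCarrel R i (S13.xF n R C j) := S13.sc_glue hsc hsj.2.1
        have hlt : i < S13.xF n R C j := by
          rw [Fin.lt_def]
          have := hsj.1
          rw [Fin.lt_def] at hij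
          omega
        have hst := hC.2.2.2 _ hmem _ hsj.2.2 hlt hscix
        simp only at hst
        rw [Fin.lt_def] at hij
        omega
    · -- uniqueness
      rintro β ⟨⟨hβu, hβi⟩, hβc⟩
      have memC : ∀ p ∈ C, IsCritical n R β p.1 ∧ p.2 = β p.1 := by
        intro p hp; rw [← hβc] at hp; exact hp
      have critC : ∀ i : Fin n, IsCritical n R β i → (i, β i) ∈ C := by
        intro i hcrit
        rw [← hβc]
        exact ⟨hcrit, rfl⟩
      have key : ∀ d : ℕ, ∀ i : Fin n, (S13.xF n R C i).val - i.val ≤ d →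
          β i + (S13.xF n R C i).val = S13.yF n R C i + i.val := by
        intro d
        induction d with
        | zero =>
          intro i hd
          have hsi := S13.x_spec hC i
          have hxi : S13.xF n R C i = i := Fin.ext (by omega)
          have h : S13.yF n R C i = β (S13.xF n R C i) := (memC _ hsi.2.2).2
          rw [hxi] at h ⊢
          omega
        | succ d ih =>
          intro i hd
          have hsi := S13.x_spec hC i
          by_cases hxi : (S13.xF n R C i).val = i.val
          · have hxi' : S13.xF n R C i = i := Fin.ext hxi
            have h : S13.yF n R C i = β (S13.xF n R C i) := (memC _ hsi.2.2).2
            rw [hxi'] at h ⊢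
            omega
          · have hxi' : i.val < (S13.xF n R C i).val := by have := hsi.1; omega
            -- i is not critical
            have hncrit : ¬ IsCritical n R β i := by
              intro hcrit
              have := S13.x_min hC i (le_refl _) (S13.sc_refl i) ⟨β i, critC i hcrit⟩
              omega
            rw [IsCritical] at hncrit
            push_neg at hncrit
            obtain ⟨j, hij, hscij, hineq⟩ := hncrit
            rw [Fin.lt_def] at hij
            have hinc_j : β i + (j.val - i.val) ≤ β j :=
              S13.incr_of_sameCarrel hβi (j.val - i.val) i j (by omega) hscij
            have hinc_x : β i + ((S13.xF n R C i).val - i.val) ≤ β (S13.xF n R C i) :=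
              S13.incr_of_sameCarrel hβi _ i _ (by omega) hsi.2.1
            have hcx : IsCritical n R β (S13.xF n R C i) := (memC _ hsi.2.2).1
            have hbx : S13.yF n R C i = β (S13.xF n R C i) := (memC _ hsi.2.2).2
            have hjx : j.val ≤ (S13.xF n R C i).val := by
              by_contra h
              push_neg at h
              have hscxj : SameCarrel R (S13.xF n R C i) j :=
                S13.sc_sub hscij (by omega) (le_refl _)
              have := hcx j (Fin.lt_def.mpr (by omega)) hscxj
              omega
            have hsj := S13.x_spec hC j
            have h1 : (S13.xF n R C j).val ≤ (S13.xF n R C i).val :=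
              S13.x_min hC j (by omega) (S13.sc_sub hsi.2.1 (by omega) (le_refl _))
                ⟨_, hsi.2.2⟩
            have hscijx : SameCarrel R i (S13.xF n R C j) := S13.sc_glue hscij hsj.2.1
            have h2 : (S13.xF n R C i).val ≤ (S13.xF n R C j).val :=
              S13.x_min hC i (by have := hsj.1; omega) hscijx ⟨_, hsj.2.2⟩
            have hxeq : S13.xF n R C j = S13.xF n R C i := Fin.ext (by omega)
            have hyeq : S13.yF n R C j = S13.yF n R C i :=
              hC.2.1 _ hsj.2.2 _ hsi.2.2 hxeq
            have hIH := ih j (by omega)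
            rw [hxeq, hyeq] at hIH
            omega
      funext i
      have hk := key (S13.xF n R C i).val i (by omega)
      have hk2 := S13.key_eq hC i
      omega
end

section
/- Every equivalence class of the relation ∼_R on upper R-tuples (defined by υ ∼_R υ′ iff {α R-increasing upper : α ≤ υ} = {α R-increasing upper : α ≤ υ′}) is closed under the entrywise meet and join operations, and is an interval [Δ_R(υ), υ̃] in the lattice of upper R-tuples, where Δ_R(υ) is the R-core and υ̃ is the R-shell tuple for the R-critical list of υ. -/
/-- υ ∼_R υ′ iff the sets of R-increasing upper tuples entrywise below them coincide. -/
def SimR (n : ℕ) (R : Finset ℕ) (υ υ' : Fin n → ℕ) : Prop :=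
  {α : Fin n → ℕ | IsRIncrUpper n R α ∧ ∀ i, α i ≤ υ i} =
    {α : Fin n → ℕ | IsRIncrUpper n R α ∧ ∀ i, α i ≤ υ' i}

open Classical in
/-- The R-shell tuple for the R-critical list of ν: entry ν i at critical indices and n
at non-critical indices. -/
noncomputable def shellTuple (n : ℕ) (R : Finset ℕ) (ν : Fin n → ℕ) (i : Fin n) : ℕ :=
  if IsCritical n R ν i then ν i else n

section Aux

variable {n : ℕ} {R : Finset ℕ}

lemma sameCarrel_refl (R : Finset ℕ) (i : Fin n) : SameCarrel R i i :=
  fun _ _ hq => by omega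

lemma sameCarrel_trans {i j k : Fin n} (h1 : SameCarrel R i j)
    (h2 : SameCarrel R j k) : SameCarrel R i k := by
  intro q hq hc
  rcases le_or_gt q j.val with h | h
  · exact h1 q hq ⟨hc.1, h⟩
  · exact h2 q hq ⟨by omega, hc.2⟩

lemma sameCarrel_mono_left {i j k : Fin n} (hij : i ≤ j) (h : SameCarrel R i k) :
    SameCarrel R j k := fun q hq hc =>
  h q hq ⟨by have := Fin.le_def.mp hij; omega, hc.2⟩

lemma sameCarrel_mono_right {i j k : Fin n} (hjk : j ≤ k) (h : SameCarrel R i k) :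
    SameCarrel R i j := fun q hq hc =>
  h q hq ⟨hc.1, le_trans hc.2 (Fin.le_def.mp hjk)⟩

open Classical in
noncomputable def carrelSet (n : ℕ) (R : Finset ℕ) (i : Fin n) : Finset (Fin n) :=
  Finset.univ.filter (fun j => i ≤ j ∧ SameCarrel R i j)

lemma mem_carrelSet {i j : Fin n} :
    j ∈ carrelSet n R i ↔ i ≤ j ∧ SameCarrel R i j := by
  simp [carrelSet]

lemma carrelSet_nonempty (i : Fin n) : (carrelSet n R i).Nonempty :=
  ⟨i, mem_carrelSet.mpr ⟨le_refl i, sameCarrel_refl R i⟩⟩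

noncomputable def delta (n : ℕ) (R : Finset ℕ) (υ : Fin n → ℕ) (i : Fin n) : ℕ :=
  ((carrelSet n R i).image (fun j => υ j + i.val - j.val)).min'
    ((carrelSet_nonempty i).image _)

lemma delta_le {υ : Fin n → ℕ} {i j : Fin n} (h : j ∈ carrelSet n R i) :
    delta n R υ i ≤ υ j + i.val - j.val :=
  Finset.min'_le _ _ (Finset.mem_image_of_mem _ h)

lemma exists_delta_eq (υ : Fin n → ℕ) (i : Fin n) :
    ∃ j ∈ carrelSet n R i, delta n R υ i = υ j + i.val - j.val := by
  have h := Finset.min'_mem ((carrelSet n R i).image (fun j => υ j + i.val - j.val))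
    ((carrelSet_nonempty i).image _)
  rw [Finset.mem_image] at h
  obtain ⟨j, hj, hval⟩ := h
  exact ⟨j, hj, hval.symm⟩

lemma le_delta {υ : Fin n → ℕ} {i : Fin n} {c : ℕ}
    (h : ∀ j ∈ carrelSet n R i, c ≤ υ j + i.val - j.val) : c ≤ delta n R υ i := by
  apply Finset.le_min'
  intro y hy
  rw [Finset.mem_image] at hy
  obtain ⟨j, hj, rfl⟩ := hy
  exact h j hj

lemma chain {α : Fin n → ℕ} (hα : IsRIncr n R α) :
    ∀ (d : ℕ) (i j : Fin n), j.val = i.val + d → SameCarrel R i j → α i + d ≤ α j := by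
  intro d
  induction d with
  | zero =>
    intro i j hj _
    have : i = j := Fin.ext (by omega)
    subst this; simp
  | succ d ih =>
    intro i j hj hsc
    have hj'lt : i.val + d < n := by have := j.isLt; omega
    set j' : Fin n := ⟨i.val + d, hj'lt⟩ with hj'def
    have h1 : α i + d ≤ α j' := by
      apply ih i j' rfl
      exact sameCarrel_mono_right (by rw [Fin.le_def]; simp [hj'def]; omega) hsc
    have hnotR : (j'.val + 1) ∉ R := by
      intro hmem
      exact hsc _ hmem ⟨by simp [hj'def], by simp [hj'def]; omega⟩
    have h2 : α j' < α j := hα j' j (by simp [hj'def]; omega) hnotR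
    omega

lemma chain' {α : Fin n → ℕ} (hα : IsRIncr n R α) {i j : Fin n} (hij : i ≤ j)
    (hsc : SameCarrel R i j) : α i + (j.val - i.val) ≤ α j :=
  chain hα (j.val - i.val) i j (by have := Fin.le_def.mp hij; omega) hsc

lemma delta_le_self (υ : Fin n → ℕ) (i : Fin n) : delta n R υ i ≤ υ i := by
  have h := delta_le (υ := υ) (mem_carrelSet.mpr ⟨le_refl i, sameCarrel_refl R i⟩)
  omega

lemma delta_isRIncrUpper {υ : Fin n → ℕ} (hu : IsUpperTuple n υ) :
    IsRIncrUpper n R (delta n R υ) := by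
  constructor
  · intro i
    constructor
    · apply le_delta
      intro j hj
      obtain ⟨hij, -⟩ := mem_carrelSet.mp hj
      have h1 := (hu j).1
      have h2 := Fin.le_def.mp hij
      omega
    · exact le_trans (delta_le_self υ i) (hu i).2
  · intro i j hj hnotR
    obtain ⟨k, hk, hkeq⟩ := exists_delta_eq (R := R) υ j
    obtain ⟨hjk, hsck⟩ := mem_carrelSet.mp hk
    have hik : i ≤ k := by rw [Fin.le_def]; have := Fin.le_def.mp hjk; omega
    have hscij : SameCarrel R i j := by
      intro q hq hc
      have : q = i.val + 1 := by omega
      exact hnotR (this ▸ hq)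
    have hkmem : k ∈ carrelSet n R i :=
      mem_carrelSet.mpr ⟨hik, sameCarrel_trans hscij hsck⟩
    have h1 := delta_le (υ := υ) hkmem
    have h2 := (hu k).1
    have h3 := Fin.le_def.mp hjk
    have h4 := Fin.le_def.mp hik
    omega

lemma class_eq (υ : Fin n → ℕ) :
    {α : Fin n → ℕ | IsRIncrUpper n R α ∧ ∀ i, α i ≤ υ i} =
      {α : Fin n → ℕ | IsRIncrUpper n R α ∧ ∀ i, α i ≤ delta n R υ i} := by
  ext α
  simp only [Set.mem_setOf_eq]
  constructor
  · rintro ⟨hα, hle⟩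
    refine ⟨hα, fun i => le_delta fun j hj => ?_⟩
    obtain ⟨hij, hsc⟩ := mem_carrelSet.mp hj
    have h1 := chain' hα.2 hij hsc
    have h2 := hle j
    have h3 := Fin.le_def.mp hij
    omega
  · rintro ⟨hα, hle⟩
    exact ⟨hα, fun i => le_trans (hle i) (delta_le_self υ i)⟩

lemma simR_iff {υ w : Fin n → ℕ} (hu : IsUpperTuple n υ) (hw : IsUpperTuple n w) :
    SimR n R w υ ↔ ∀ i, delta n R w i = delta n R υ i := by
  constructor
  · intro h
    have hmem1 : delta n R w ∈ {α : Fin n → ℕ | IsRIncrUpper n R α ∧ ∀ i, α i ≤ w i} :=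
      ⟨delta_isRIncrUpper hw, delta_le_self w⟩
    have hmem2 : delta n R υ ∈ {α : Fin n → ℕ | IsRIncrUpper n R α ∧ ∀ i, α i ≤ υ i} :=
      ⟨delta_isRIncrUpper hu, delta_le_self υ⟩
    rw [SimR] at h
    have h1 : delta n R w ∈ {α : Fin n → ℕ | IsRIncrUpper n R α ∧ ∀ i, α i ≤ delta n R υ i} := by
      rw [← class_eq, ← h]; exact hmem1
    have h2 : delta n R υ ∈ {α : Fin n → ℕ | IsRIncrUpper n R α ∧ ∀ i, α i ≤ delta n R w i} := by
      rw [← class_eq, h]; exact hmem2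
    exact fun i => le_antisymm (h1.2 i) (h2.2 i)
  · intro h
    rw [SimR, class_eq w, class_eq υ]
    have : delta n R w = delta n R υ := funext h
    rw [this]

lemma exists_critical_argmin {υ : Fin n → ℕ} (hu : IsUpperTuple n υ) (i : Fin n) :
    ∃ x : Fin n, i ≤ x ∧ SameCarrel R i x ∧ IsCritical n R υ x ∧
      delta n R υ i = υ x + i.val - x.val := by
  classical
  set A := (carrelSet n R i).filter (fun j => υ j + i.val - j.val = delta n R υ i) with hA
  have hAne : A.Nonempty := by
    obtain ⟨j, hj, hjeq⟩ := exists_delta_eq (R := R) υ i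
    exact ⟨j, Finset.mem_filter.mpr ⟨hj, hjeq.symm⟩⟩
  set x := A.max' hAne with hx
  have hxA : x ∈ A := A.max'_mem hAne
  obtain ⟨hxc, hxeq⟩ := Finset.mem_filter.mp hxA
  obtain ⟨hix, hscx⟩ := mem_carrelSet.mp hxc
  refine ⟨x, hix, hscx, ?_, hxeq.symm⟩
  intro j hxj hscxj
  have hjmem : j ∈ carrelSet n R i :=
    mem_carrelSet.mpr ⟨le_trans hix (le_of_lt hxj), sameCarrel_trans hscx hscxj⟩
  have h1 := delta_le (υ := υ) hjmem
  have hjnotA : j ∉ A := by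
    intro hjA
    exact absurd (A.le_max' j hjA) (not_le.mpr hxj)
  have h2 : υ j + i.val - j.val ≠ delta n R υ i := by
    intro heq
    exact hjnotA (Finset.mem_filter.mpr ⟨hjmem, heq⟩)
  have h3 := (hu j).1
  have h4 := (hu x).1
  have h5 := Fin.le_def.mp hix
  have h6 := Fin.lt_def.mp hxj
  omega

lemma coreMap_eq_delta {υ : Fin n → ℕ} (hu : IsUpperTuple n υ) (i : Fin n) :
    coreMap n R υ i = delta n R υ i := by
  classical
  obtain ⟨x, hix, hscx, hcrit, heq⟩ := exists_critical_argmin (R := R) hu i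
  rw [coreMap]
  set s : Finset (Fin n) :=
    Finset.univ.filter (fun y => i ≤ y ∧ SameCarrel R i y ∧ IsCritical n R υ y) with hs
  have hxs : x ∈ s := by simp [hs, hix, hscx, hcrit]
  have hsne : s.Nonempty := ⟨x, hxs⟩
  rw [dif_pos hsne]
  set m := s.min' hsne with hm
  have hms : m ∈ s := s.min'_mem hsne
  have hmx : m ≤ x := s.min'_le x hxs
  obtain ⟨-, him, hscm, hcritm⟩ := Finset.mem_filter.mp hms
  have hmeqx : m = x := by
    by_contra hne
    have hmlt : m < x := lt_of_le_of_ne hmx hne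
    have hscmx : SameCarrel R m x := sameCarrel_mono_left him hscx
    have hc := hcritm x hmlt hscmx
    have hmmem : m ∈ carrelSet n R i := mem_carrelSet.mpr ⟨him, hscm⟩
    have h1 := delta_le (υ := υ) hmmem
    have h2 := (hu m).1
    have h3 := (hu x).1
    have h4 := Fin.le_def.mp him
    have h5 := Fin.lt_def.mp hmlt
    omega
  rw [hmeqx]
  have h1 := (hu x).1
  have h2 := Fin.le_def.mp hix
  omega

lemma critical_delta {υ : Fin n → ℕ} {x : Fin n} (hcrit : IsCritical n R υ x) :
    delta n R υ x = υ x := by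
  apply le_antisymm (delta_le_self υ x)
  apply le_delta
  intro j hj
  obtain ⟨hxj, hsc⟩ := mem_carrelSet.mp hj
  rcases eq_or_lt_of_le hxj with heq | hlt
  · subst heq; omega
  · have hc := hcrit j hlt hsc
    have h2 := Fin.lt_def.mp hlt
    omega

lemma delta_eq_of_between {υ w : Fin n → ℕ} (hu : IsUpperTuple n υ)
    (h1 : ∀ i, delta n R υ i ≤ w i) (h2 : ∀ i, w i ≤ shellTuple n R υ i) (i : Fin n) :
    delta n R w i = delta n R υ i := by
  apply le_antisymm
  · obtain ⟨x, hix, hscx, hcrit, heq⟩ := exists_critical_argmin (R := R) hu i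
    have hxmem : x ∈ carrelSet n R i := mem_carrelSet.mpr ⟨hix, hscx⟩
    have hle := delta_le (υ := w) hxmem
    have hwx : w x ≤ υ x := by
      have := h2 x
      rwa [shellTuple, if_pos hcrit] at this
    omega
  · apply le_delta
    intro j hj
    obtain ⟨hij, hsc⟩ := mem_carrelSet.mp hj
    have hch := chain' (delta_isRIncrUpper (R := R) hu).2 hij hsc
    have hwj := h1 j
    have h3 := Fin.le_def.mp hij
    omega

lemma between_of_delta_eq {υ w : Fin n → ℕ} (hu : IsUpperTuple n υ)
    (hw : IsUpperTuple n w) (h : ∀ i, delta n R w i = delta n R υ i) :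
    (∀ i, delta n R υ i ≤ w i) ∧ ∀ i, w i ≤ shellTuple n R υ i := by
  constructor
  · intro i
    rw [← h i]
    exact delta_le_self w i
  · intro i
    rw [shellTuple]
    split
    case isTrue hcrit =>
      by_contra hcon
      push_neg at hcon
      have hdw : delta n R w i = υ i := by rw [h i, critical_delta hcrit]
      obtain ⟨j, hj, hjeq⟩ := exists_delta_eq (R := R) w i
      obtain ⟨hij, hsc⟩ := mem_carrelSet.mp hj
      have hjne : j ≠ i := by
        intro heq
        subst heq
        omega
      have hilt : i < j := lt_of_le_of_ne hij (Ne.symm hjne)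
      have hwj : w j + i.val - j.val = υ i := by
        have := (hw j).1
        have := Fin.le_def.mp hij
        omega
      have hdj : w j < delta n R υ j := by
        have : w j + 1 ≤ delta n R υ j := by
          apply le_delta
          intro k hk
          obtain ⟨hjk, hsck⟩ := mem_carrelSet.mp hk
          have hik : i < k := lt_of_lt_of_le hilt hjk
          have hc := hcrit k hik (sameCarrel_trans hsc hsck)
          have hb1 := (hu k).1
          have hb2 := (hw j).1
          have hf1 := Fin.le_def.mp hjk
          have hf2 := Fin.lt_def.mp hilt
          omega
        omega
      have := h j
      have := delta_le_self (R := R) w j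
      omega
    case isFalse => exact (hw i).2

end Aux

/-- Every ∼_R-equivalence class of upper R-tuples is closed under entrywise meet and
join, and is the interval [Δ_R(υ), υ̃] from the R-core of υ to the R-shell tuple of υ
inside the lattice of upper R-tuples. -/
theorem stmt14 (n : ℕ) (R : Finset ℕ) (hR : R ⊆ Finset.Ico 1 n)
    (υ : Fin n → ℕ) (hu : IsUpperTuple n υ) :
    (∀ υ' : Fin n → ℕ, IsUpperTuple n υ' → SimR n R υ υ' →
        SimR n R (fun i => min (υ i) (υ' i)) υ ∧ SimR n R (fun i => max (υ i) (υ' i)) υ) ∧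
    (∀ w : Fin n → ℕ, IsUpperTuple n w →
        (SimR n R w υ ↔
          (∀ i, coreMap n R υ i ≤ w i) ∧ ∀ i, w i ≤ shellTuple n R υ i)) := by
  have hshell_self : ∀ i, υ i ≤ shellTuple n R υ i := by
    intro i
    rw [shellTuple]
    split
    · exact le_refl _
    · exact (hu i).2
  constructor
  · intro υ' hu' hsim
    have hde : ∀ i, delta n R υ i = delta n R υ' i := (simR_iff hu' hu).mp hsim
    constructor
    · rw [SimR]
      ext α
      simp only [Set.mem_setOf_eq]
      constructor
      · rintro ⟨hα, hle⟩
        exact ⟨hα, fun i => le_trans (hle i) (min_le_left _ _)⟩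
      · rintro ⟨hα, hle⟩
        have hmem : α ∈ {α : Fin n → ℕ | IsRIncrUpper n R α ∧ ∀ i, α i ≤ υ' i} := by
          rw [← hsim]; exact ⟨hα, hle⟩
        exact ⟨hα, fun i => le_min (hle i) (hmem.2 i)⟩
    · have hbet := between_of_delta_eq hu hu' (fun i => (hde i).symm)
      have hm : IsUpperTuple n (fun i => max (υ i) (υ' i)) := by
        intro i
        exact ⟨le_trans (hu i).1 (le_max_left _ _), max_le (hu i).2 (hu' i).2⟩
      apply (simR_iff hu hm).mpr
      apply delta_eq_of_between hu
      · exact fun i => le_trans (delta_le_self υ i) (le_max_left _ _)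
      · exact fun i => max_le (hshell_self i) (hbet.2 i)
  · intro w hw
    rw [simR_iff hu hw]
    constructor
    · intro h
      obtain ⟨ha, hb⟩ := between_of_delta_eq hu hw h
      refine ⟨fun i => ?_, hb⟩
      rw [coreMap_eq_delta hu i]
      exact ha i
    · rintro ⟨h1, h2⟩
      refine fun i => delta_eq_of_between hu (fun i => ?_) h2 i
      rw [← coreMap_eq_delta hu i]
      exact h1 i
end

section
/- Let λ be a partition with at most n parts and let β be an upper λ-tuple. The row bound tableau set S_λ(β) = {T semistandard of shape λ with entries in [n] : the last entry of each row i is ≤ β_i} is a principal order ideal in the lattice of semistandard tableaux of shape λ: S_λ(β) = [Q_λ(β)] where Q_λ(β) is the entrywise join of all tableaux in S_λ(β), and Q_λ(β) itself lies in S_λ(β). -/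
/-- The set of semistandard tableaux of shape μ with (0-based) entries in {0, ..., n-1}
(representing values in [n]) whose entry at the end of each row i is at most β_i
(with β recorded 1-based, entries 0-based). -/
def RowBoundSet (n : ℕ) (μ : YoungDiagram) (β : Fin n → ℕ) :
    Set (SemistandardYoungTableau μ) :=
  {T | (∀ c ∈ μ.cells, T c.1 c.2 < n) ∧
    ∀ i : Fin n, 0 < μ.rowLen i.val → T i.val (μ.rowLen i.val - 1) < β i}

/-- The minimal semistandard tableau, with entry `i` in row `i`. -/
def minSSYT (μ : YoungDiagram) : SemistandardYoungTableau μ where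
  entry i j := if (i, j) ∈ μ then i else 0
  row_weak' := by
    intro i j1 j2 hj hcell
    have h1 : (i, j1) ∈ μ := μ.up_left_mem le_rfl hj.le hcell
    simp [h1, hcell]
  col_strict' := by
    intro i1 i2 j hi hcell
    have h1 : (i1, j) ∈ μ := μ.up_left_mem hi.le le_rfl hcell
    simpa [h1, hcell] using hi
  zeros' := by intro i j h; simp [h]

theorem minSSYT_mem (n : ℕ) (μ : YoungDiagram) (hrows : μ.colLen 0 ≤ n)
    (β : Fin n → ℕ) (hβ : ∀ i : Fin n, i.val + 1 ≤ β i ∧ β i ≤ n) :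
    minSSYT μ ∈ RowBoundSet n μ β := by
  constructor
  · intro c hc
    rw [YoungDiagram.mem_cells] at hc
    have h1 : c.1 < μ.colLen c.2 := YoungDiagram.mem_iff_lt_colLen.mp hc
    have := μ.colLen_anti 0 c.2 (Nat.zero_le _)
    show (if (c.1, c.2) ∈ μ then c.1 else 0) < n
    rw [if_pos hc]
    omega
  · intro i hi
    have hc : (i.val, μ.rowLen i.val - 1) ∈ μ :=
      YoungDiagram.mem_iff_lt_rowLen.mpr (by omega)
    show (if (i.val, μ.rowLen i.val - 1) ∈ μ then i.val else 0) < β i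
    rw [if_pos hc]
    exact (hβ i).1

/-- For a partition shape μ with at most n rows and an upper λ-tuple β, the row bound
tableau set S_λ(β) is a principal order ideal: it contains its entrywise join Q_λ(β)
and equals the set of tableaux entrywise ≤ Q_λ(β). -/
theorem stmt16 (n : ℕ) (μ : YoungDiagram) (hrows : μ.colLen 0 ≤ n)
    (β : Fin n → ℕ) (hβ : ∀ i : Fin n, i.val + 1 ≤ β i ∧ β i ≤ n) :
    ∃ Q ∈ RowBoundSet n μ β,
      (∀ i j : ℕ, Q i j = sSup {v : ℕ | ∃ T ∈ RowBoundSet n μ β, T i j = v}) ∧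
      RowBoundSet n μ β = {T | ∀ i j : ℕ, T i j ≤ Q i j} := by
  set S := RowBoundSet n μ β with hS
  have hT0 : minSSYT μ ∈ S := minSSYT_mem n μ hrows β hβ
  set f : ℕ → ℕ → ℕ := fun i j => sSup {v : ℕ | ∃ T ∈ S, T i j = v} with hf
  have hne : ∀ i j, {v : ℕ | ∃ T ∈ S, T i j = v}.Nonempty :=
    fun i j => ⟨minSSYT μ i j, minSSYT μ, hT0, rfl⟩
  have hbdd : ∀ i j, BddAbove {v : ℕ | ∃ T ∈ S, T i j = v} := by
    intro i j
    refine ⟨n, ?_⟩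
    rintro v ⟨T, hT, rfl⟩
    by_cases hc : (i, j) ∈ μ
    · exact (hT.1 (i, j) ((YoungDiagram.mem_cells (i, j)).mpr hc)).le
    · rw [T.zeros hc]; exact Nat.zero_le _
  have hle : ∀ (T : SemistandardYoungTableau μ), T ∈ S → ∀ i j, T i j ≤ f i j :=
    fun T hT i j => le_csSup (hbdd i j) ⟨T, hT, rfl⟩
  have hzero : ∀ {i j}, (i, j) ∉ μ → f i j = 0 := by
    intro i j hc
    refine le_antisymm (csSup_le (hne i j) ?_) (Nat.zero_le _)
    rintro v ⟨T, hT, rfl⟩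
    exact (T.zeros hc).le
  set Q : SemistandardYoungTableau μ := {
    entry := f
    row_weak' := by
      intro i j1 j2 hj hcell
      refine csSup_le (hne i j1) ?_
      rintro v ⟨T, hT, rfl⟩
      exact (T.row_weak hj hcell).trans (hle T hT i j2)
    col_strict' := by
      intro i1 i2 j hi hcell
      have hpos : 0 < f i2 j := by
        have := hle (minSSYT μ) hT0 i2 j
        have h2 : (minSSYT μ) i2 j = i2 := by
          show (if (i2, j) ∈ μ then i2 else 0) = i2
          rw [if_pos hcell]
        omega
      have : f i1 j ≤ f i2 j - 1 := by
        refine csSup_le (hne i1 j) ?_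
        rintro v ⟨T, hT, rfl⟩
        have := (T.col_strict hi hcell).trans_le (hle T hT i2 j)
        omega
      omega
    zeros' := fun {i j} h => hzero h } with hQ
  have hQmem : Q ∈ S := by
    constructor
    · intro c hc
      rw [YoungDiagram.mem_cells] at hc
      have hn : 0 < n := by
        have h1 : c.1 < μ.colLen c.2 := YoungDiagram.mem_iff_lt_colLen.mp hc
        have := μ.colLen_anti 0 c.2 (Nat.zero_le _)
        omega
      have : f c.1 c.2 ≤ n - 1 := by
        refine csSup_le (hne c.1 c.2) ?_
        rintro v ⟨T, hT, rfl⟩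
        have := hT.1 c hc
        omega
      show f c.1 c.2 < n
      omega
    · intro i hi
      have hβpos : 0 < β i := by have := (hβ i).1; omega
      have : f i.val (μ.rowLen i.val - 1) ≤ β i - 1 := by
        refine csSup_le (hne _ _) ?_
        rintro v ⟨T, hT, rfl⟩
        have := hT.2 i hi
        omega
      show f i.val (μ.rowLen i.val - 1) < β i
      omega
  refine ⟨Q, hQmem, fun i j => rfl, ?_⟩
  ext T
  constructor
  · intro hT i j
    exact hle T hT i j
  · intro hT
    constructor
    · intro c hc
      exact lt_of_le_of_lt (hT c.1 c.2) (hQmem.1 c hc)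
    · intro i hi
      exact lt_of_le_of_lt (hT _ _) (hQmem.2 i hi)
end
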